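/- arXiv:2501.11675 — 6 statements merged into one kernel-verified Lean document; each statement's English description precedes it below -/
import Mathlib

section
/- Every tournamenton W satisfies t(TT₃, W) ≥ 1/8, with equality if and only if W is regular. -/
open MeasureTheory Filter Topology

/-- A tournament: a finite directed graph on vertex set `Fin n` with no loops and
exactly one arc between each pair of distinct vertices. -/
structure Tournament where
  n : ℕ
  arc : Fin n → Fin n → Bool
  irrefl : ∀ i, arc i i = false
  total : ∀ i j, i ≠ j → arc i j = !(arc j i)

/-- The tournament obtained by reversing all arcs. -/
def Tournament.reverse (T : Tournament) : Tournament where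
  n := T.n
  arc := fun i j => T.arc j i
  irrefl := T.irrefl
  total := fun i j h => T.total j i (Ne.symm h)

/-- The number of homomorphisms (arc-preserving maps) from `H` to `T`. -/
noncomputable def homCount (H T : Tournament) : ℕ :=
  Nat.card {f : Fin H.n → Fin T.n // ∀ i j, H.arc i j → T.arc (f i) (f j)}

/-- The homomorphism density `t(H,T) = hom(H,T) / v(T)^(v(H))`. -/
noncomputable def homDensity (H T : Tournament) : ℝ :=
  (homCount H T : ℝ) / (T.n : ℝ) ^ H.n

/-- The out-degree of a vertex in a tournament. -/
noncomputable def outDeg (T : Tournament) (v : Fin T.n) : ℕ :=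
  Nat.card {j : Fin T.n // T.arc v j}

/-- The tournament on 2 vertices with arc 1→2. -/
def TT2 : Tournament := ⟨2, fun i j => decide (i < j), by decide, by decide⟩

/-- The transitive tournament on 3 vertices. -/
def TT3 : Tournament := ⟨3, fun i j => decide (i < j), by decide, by decide⟩

/-- The transitive tournament on 4 vertices. -/
def TT4 : Tournament := ⟨4, fun i j => decide (i < j), by decide, by decide⟩

/-- The cyclic tournament on 3 vertices. -/
def C3 : Tournament :=
  ⟨3, fun i j => decide ((i.val, j.val) ∈ [(0,1),(1,2),(2,0)]), by decide, by decide⟩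

/-- The unique strongly connected tournament on 4 vertices. -/
def C4 : Tournament :=
  ⟨4, fun i j => decide ((i.val, j.val) ∈ [(0,1),(1,2),(2,3),(3,0),(0,2),(1,3)]),
    by decide, by decide⟩

/-- A cyclic triangle together with a sink vertex. -/
def H5 : Tournament :=
  ⟨4, fun i j => decide ((i.val, j.val) ∈ [(0,1),(1,2),(2,0),(0,3),(1,3),(2,3)]),
    by decide, by decide⟩

/-- A cyclic triangle together with a source vertex. -/
def H7 : Tournament :=
  ⟨4, fun i j => decide ((i.val, j.val) ∈ [(0,1),(1,2),(2,0),(3,0),(3,1),(3,2)]),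
    by decide, by decide⟩

/-- The 5-vertex tournament H₉: vertex 0 is a sink, vertex 1 beats only vertex 0,
and vertices 2,3,4 form a cyclic triangle. -/
def H9 : Tournament :=
  ⟨5, fun i j => decide ((i.val, j.val) ∈
      [(1,0),(2,0),(3,0),(4,0),(2,1),(3,1),(4,1),(2,3),(3,4),(4,2)]),
    by decide, by decide⟩

/-- The 5-vertex tournament H₁₆, obtained from H₉ by reversing all arcs. -/
def H16 : Tournament := H9.reverse

/-- The rotational (regular) tournament on 5 vertices: arcs i→i+1 and i→i+2 (mod 5). -/
def H19 : Tournament :=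
  ⟨5, fun i j => decide (j.val = (i.val + 1) % 5 ∨ j.val = (i.val + 2) % 5),
    by decide, by decide⟩

/-- A tournamenton: a measurable function `W : [0,1]² → [0,1]` with
`W x y + W y x = 1` on `[0,1]²`. -/
structure Tournamenton where
  W : ℝ → ℝ → ℝ
  measurable : Measurable (Function.uncurry W)
  nonneg : ∀ x ∈ Set.Icc (0:ℝ) 1, ∀ y ∈ Set.Icc (0:ℝ) 1, 0 ≤ W x y
  le_one : ∀ x ∈ Set.Icc (0:ℝ) 1, ∀ y ∈ Set.Icc (0:ℝ) 1, W x y ≤ 1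
  skew : ∀ x ∈ Set.Icc (0:ℝ) 1, ∀ y ∈ Set.Icc (0:ℝ) 1, W x y + W y x = 1

/-- The homomorphism density of a tournament `H` in a tournamenton `W`. -/
noncomputable def tonDensity (H : Tournament) (W : Tournamenton) : ℝ :=
  ∫ x in Set.univ.pi (fun _ : Fin H.n => Set.Icc (0:ℝ) 1),
    ∏ i : Fin H.n, ∏ j : Fin H.n, if H.arc i j then W.W (x i) (x j) else 1

/-- The out-degree `d⁺_W(x) = ∫₀¹ W(x,y) dy` of a point in a tournamenton. -/
noncomputable def outDegW (W : Tournamenton) (x : ℝ) : ℝ :=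
  ∫ y in Set.Icc (0:ℝ) 1, W.W x y

/-- A tournamenton is regular if almost every point has out-degree 1/2. -/
def Tournamenton.Regular (W : Tournamenton) : Prop :=
  ∀ᵐ x ∂(volume.restrict (Set.Icc (0:ℝ) 1)), outDegW W x = 1/2

/-- `W(x,y) = 1/2` for almost all `(x,y) ∈ [0,1]²`. -/
def Tournamenton.AEHalf (W : Tournamenton) : Prop :=
  ∀ᵐ p : ℝ × ℝ ∂(volume.restrict ((Set.Icc (0:ℝ) 1) ×ˢ (Set.Icc (0:ℝ) 1))),
    W.W p.1 p.2 = 1/2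

/-- A sequence of tournaments is quasirandom if the density of every tournament `H`
on `k` vertices tends to `(1/2)^(k(k-1)/2)`. -/
def Quasirandom (T : ℕ → Tournament) : Prop :=
  ∀ H : Tournament, Tendsto (fun n => homDensity H (T n)) atTop
    (𝓝 ((1/2 : ℝ) ^ (H.n * (H.n - 1) / 2)))

/-- A sequence of tournaments is nearly regular if for every `ε > 0`, eventually all
but at most `ε·v(Tₙ)` vertices have out-degree between `(1/2-ε)v(Tₙ)` and `(1/2+ε)v(Tₙ)`. -/
def NearlyRegular (T : ℕ → Tournament) : Prop :=
  ∀ ε : ℝ, 0 < ε → ∃ n₀ : ℕ, ∀ n, n₀ ≤ n →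
    (Nat.card {v : Fin (T n).n //
        ¬((1/2 - ε) * ((T n).n : ℝ) ≤ (outDeg (T n) v : ℝ) ∧
          (outDeg (T n) v : ℝ) ≤ (1/2 + ε) * ((T n).n : ℝ))} : ℝ) ≤ ε * ((T n).n : ℝ)

/-- A formal linear combination of tournaments, as a list of (coefficient, tournament) pairs. -/
abbrev LinComb := List (ℝ × Tournament)

/-- The density of a formal linear combination in a tournament. -/
noncomputable def lcDensT (c : LinComb) (T : Tournament) : ℝ :=
  (c.map (fun p => p.1 * homDensity p.2 T)).sum

/-- The density of a formal linear combination in a tournamenton. -/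
noncomputable def lcDensW (c : LinComb) (W : Tournamenton) : ℝ :=
  (c.map (fun p => p.1 * tonDensity p.2 W)).sum

/-- `t(c, 1/2) = Σᵢ αᵢ (1/2)^(v(Hᵢ)(v(Hᵢ)-1)/2)`. -/
noncomputable def lcHalf (c : LinComb) : ℝ :=
  (c.map (fun p => p.1 * (1/2 : ℝ) ^ (p.2.n * (p.2.n - 1) / 2))).sum

/-- A set of formal linear combinations forces quasirandomness. -/
def ForcesQR (S : Set LinComb) : Prop :=
  ∀ T : ℕ → Tournament, Tendsto (fun n => (T n).n) atTop atTop →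
    (∀ c ∈ S, Tendsto (fun n => lcDensT c (T n)) atTop (𝓝 (lcHalf c))) →
    Quasirandom T

/-- A set of formal linear combinations forces quasirandomness in regular tournaments. -/
def ForcesQRRegularSet (S : Set LinComb) : Prop :=
  ∀ T : ℕ → Tournament, NearlyRegular T →
    (∀ c ∈ S, Tendsto (fun n => lcDensT c (T n)) atTop (𝓝 (lcHalf c))) →
    Quasirandom T

/-- A single tournament forces quasirandomness in regular tournaments. -/
def ForcesQRRegular (H : Tournament) : Prop :=
  ∀ T : ℕ → Tournament, NearlyRegular T →
    Tendsto (fun n => homDensity H (T n)) atTop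
      (𝓝 ((1/2 : ℝ) ^ (H.n * (H.n - 1) / 2))) →
    Quasirandom T

namespace Stmt2Aux

noncomputable def μ01 : Measure ℝ := volume.restrict (Set.Icc 0 1)

instance : IsProbabilityMeasure μ01 := ⟨by simp [μ01, Real.volume_Icc]⟩

lemma pi_restrict :
    (volume : Measure (Fin 3 → ℝ)).restrict (Set.univ.pi fun _ => Set.Icc (0:ℝ) 1) =
      Measure.pi fun _ : Fin 3 => μ01 := by
  refine (Measure.pi_eq (μ := fun _ : Fin 3 => μ01) fun s hs => ?_).symm
  rw [Measure.restrict_apply (MeasurableSet.univ_pi hs), ← Set.pi_inter_distrib,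
    volume_pi, Measure.pi_pi]
  simp [μ01, Measure.restrict_apply (hs _)]

noncomputable def P : Measure (ℝ × (ℝ × ℝ)) := μ01.prod (μ01.prod μ01)
noncomputable def S2 : Measure (ℝ × ℝ) := μ01.prod μ01

instance : IsProbabilityMeasure P := by unfold P; infer_instance
instance : IsProbabilityMeasure S2 := by unfold S2; infer_instance

lemma S2_eq : S2 = volume.restrict ((Set.Icc (0:ℝ) 1) ×ˢ (Set.Icc (0:ℝ) 1)) := by
  rw [S2, μ01, Measure.prod_restrict, ← Measure.volume_eq_prod]

lemma P_eq : P = volume.restrict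
    ((Set.Icc (0:ℝ) 1) ×ˢ ((Set.Icc (0:ℝ) 1) ×ˢ (Set.Icc (0:ℝ) 1))) := by
  rw [P, μ01, Measure.prod_restrict, Measure.prod_restrict,
    ← Measure.volume_eq_prod, ← Measure.volume_eq_prod]

lemma ae_box : ∀ᵐ p : ℝ × (ℝ × ℝ) ∂P,
    p.1 ∈ Set.Icc (0:ℝ) 1 ∧ p.2.1 ∈ Set.Icc (0:ℝ) 1 ∧ p.2.2 ∈ Set.Icc (0:ℝ) 1 := by
  rw [P_eq]
  filter_upwards [ae_restrict_mem ((measurableSet_Icc).prod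
    ((measurableSet_Icc).prod measurableSet_Icc))] with p hp
  exact ⟨hp.1, hp.2.1, hp.2.2⟩

lemma ae_box2 : ∀ᵐ q : ℝ × ℝ ∂S2,
    q.1 ∈ Set.Icc (0:ℝ) 1 ∧ q.2 ∈ Set.Icc (0:ℝ) 1 := by
  rw [S2_eq]
  filter_upwards [ae_restrict_mem ((measurableSet_Icc).prod measurableSet_Icc)] with q hq
  exact ⟨hq.1, hq.2⟩

lemma ae_mem1 : ∀ᵐ a : ℝ ∂μ01, a ∈ Set.Icc (0:ℝ) 1 := by
  rw [μ01]; exact ae_restrict_mem measurableSet_Icc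

lemma integrableP {f : ℝ × (ℝ × ℝ) → ℝ} (hm : Measurable f) {C : ℝ}
    (hb : ∀ p : ℝ × (ℝ × ℝ), p.1 ∈ Set.Icc (0:ℝ) 1 → p.2.1 ∈ Set.Icc (0:ℝ) 1 →
      p.2.2 ∈ Set.Icc (0:ℝ) 1 → |f p| ≤ C) : Integrable f P := by
  refine ⟨hm.aestronglyMeasurable, HasFiniteIntegral.of_bounded (C := C) ?_⟩
  filter_upwards [ae_box] with p hp
  simpa [Real.norm_eq_abs] using hb p hp.1 hp.2.1 hp.2.2

lemma integrableS2 {f : ℝ × ℝ → ℝ} (hm : Measurable f) {C : ℝ}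
    (hb : ∀ q : ℝ × ℝ, q.1 ∈ Set.Icc (0:ℝ) 1 → q.2 ∈ Set.Icc (0:ℝ) 1 → |f q| ≤ C) :
    Integrable f S2 := by
  refine ⟨hm.aestronglyMeasurable, HasFiniteIntegral.of_bounded (C := C) ?_⟩
  filter_upwards [ae_box2] with q hq
  simpa [Real.norm_eq_abs] using hb q hq.1 hq.2

lemma integrableM {f : ℝ → ℝ} (hm : Measurable f) {C : ℝ}
    (hb : ∀ a : ℝ, a ∈ Set.Icc (0:ℝ) 1 → |f a| ≤ C) : Integrable f μ01 := by
  refine ⟨hm.aestronglyMeasurable, HasFiniteIntegral.of_bounded (C := C) ?_⟩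
  filter_upwards [ae_mem1] with a ha
  simpa [Real.norm_eq_abs] using hb a ha


noncomputable def em3 : (Fin 3 → ℝ) ≃ᵐ ℝ × (ℝ × ℝ) :=
  (MeasurableEquiv.piFinSuccAbove (fun _ => ℝ) 0).trans
    ((MeasurableEquiv.refl ℝ).prodCongr (MeasurableEquiv.finTwoArrow))

lemma em3_apply (x : Fin 3 → ℝ) : em3 x = (x 0, (x 1, x 2)) := by
  simp [em3, MeasurableEquiv.piFinSuccAbove, MeasurableEquiv.finTwoArrow,
    MeasurableEquiv.prodCongr, Fin.succAbove]
  exact ⟨rfl, rfl⟩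

lemma em3_mp : MeasurePreserving em3 (Measure.pi fun _ : Fin 3 => μ01) P := by
  have h1 := measurePreserving_piFinSuccAbove (fun _ : Fin 3 => μ01) 0
  have h2 : MeasurePreserving (Prod.map (id : ℝ → ℝ) MeasurableEquiv.finTwoArrow)
      (μ01.prod (Measure.pi fun _ : Fin 2 => μ01)) P :=
    (MeasurePreserving.id μ01).prod (measurePreserving_finTwoArrow μ01)
  exact h2.comp h1

noncomputable def Hf (W : Tournamenton) : ℝ × (ℝ × ℝ) → ℝ :=
  fun p => W.W p.1 p.2.1 * W.W p.1 p.2.2 * W.W p.2.1 p.2.2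

lemma meas_pair (W : Tournamenton) {β : Type*} [MeasurableSpace β] {f g : β → ℝ}
    (hf : Measurable f) (hg : Measurable g) : Measurable fun b => W.W (f b) (g b) :=
  W.measurable.comp (hf.prodMk hg)

lemma Hf_meas (W : Tournamenton) : Measurable (Hf W) :=
  ((meas_pair W measurable_fst (measurable_fst.comp measurable_snd)).mul
    (meas_pair W measurable_fst (measurable_snd.comp measurable_snd))).mul
    (meas_pair W (measurable_fst.comp measurable_snd) (measurable_snd.comp measurable_snd))

lemma density_eq (W : Tournamenton) : tonDensity TT3 W = ∫ p, Hf W p ∂P := by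
  have hfun : ∀ x : Fin 3 → ℝ,
      (∏ i : Fin 3, ∏ j : Fin 3, if TT3.arc i j then W.W (x i) (x j) else 1)
        = Hf W (em3 x) := by
    intro x
    rw [em3_apply]
    simp [TT3, Hf, Fin.prod_univ_three]
  show (∫ x in Set.univ.pi (fun _ : Fin 3 => Set.Icc (0:ℝ) 1),
      ∏ i : Fin 3, ∏ j : Fin 3, if TT3.arc i j then W.W (x i) (x j) else 1) = _
  rw [pi_restrict]
  simp_rw [hfun]
  exact em3_mp.integral_comp' (Hf W)

lemma W_bd (W : Tournamenton) {a b : ℝ} (ha : a ∈ Set.Icc (0:ℝ) 1)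
    (hb : b ∈ Set.Icc (0:ℝ) 1) : |W.W a b| ≤ 1 :=
  abs_le.2 ⟨by linarith [W.nonneg a ha b hb], W.le_one a ha b hb⟩

lemma Hf_int (W : Tournamenton) : Integrable (Hf W) P := by
  refine integrableP (Hf_meas W) (C := 1) fun p h1 h2 h3 => ?_
  have b1 := W_bd W h1 h2; have b2 := W_bd W h1 h3; have b3 := W_bd W h2 h3
  have n1 := abs_nonneg (W.W p.1 p.2.1); have n2 := abs_nonneg (W.W p.1 p.2.2)
  have n3 := abs_nonneg (W.W p.2.1 p.2.2)
  calc |Hf W p| = |W.W p.1 p.2.1| * |W.W p.1 p.2.2| * |W.W p.2.1 p.2.2| := by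
        simp [Hf, abs_mul]
    _ ≤ 1 := mul_le_one₀ (mul_le_one₀ b1 n2 b2) n3 b3

noncomputable def dW (W : Tournamenton) : ℝ → ℝ := fun a => ∫ b, W.W a b ∂μ01

lemma dW_meas (W : Tournamenton) : Measurable (dW W) :=
  (W.measurable.stronglyMeasurable.integral_prod_right (ν := μ01)).measurable

lemma dW_bd (W : Tournamenton) {a : ℝ} (ha : a ∈ Set.Icc (0:ℝ) 1) : |dW W a| ≤ 1 := by
  have h : ‖∫ b, W.W a b ∂μ01‖ ≤ 1 * (μ01 Set.univ).toReal := by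
    refine norm_integral_le_of_norm_le_const ?_
    filter_upwards [ae_mem1] with b hb
    simpa [Real.norm_eq_abs] using W_bd W ha hb
  simpa [Real.norm_eq_abs, dW] using h

noncomputable def σ3 : ℝ × (ℝ × ℝ) ≃ᵐ ℝ × (ℝ × ℝ) :=
  (MeasurableEquiv.refl ℝ).prodCongr MeasurableEquiv.prodComm

lemma σ3_apply (p : ℝ × (ℝ × ℝ)) : σ3 p = (p.1, (p.2.2, p.2.1)) := rfl

lemma σ3_mp : MeasurePreserving σ3 P P := by
  have h : MeasurePreserving (Prod.map (id : ℝ → ℝ) (Prod.swap : ℝ × ℝ → ℝ × ℝ)) P P :=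
    (MeasurePreserving.id μ01).prod Measure.measurePreserving_swap
  exact h

lemma two_t (W : Tournamenton) :
    2 * tonDensity TT3 W = ∫ a, dW W a ^ 2 ∂μ01 := by
  have hswap : ∫ p, Hf W p ∂P = ∫ p, Hf W (σ3 p) ∂P :=
    (σ3_mp.integral_comp' (Hf W)).symm
  have hintσ : Integrable (fun p => Hf W (σ3 p)) P :=
    (σ3_mp.integrable_comp_emb σ3.measurableEmbedding).2 (Hf_int W)
  have hGm : Measurable fun p : ℝ × (ℝ × ℝ) => W.W p.1 p.2.1 * W.W p.1 p.2.2 :=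
    (meas_pair W measurable_fst (measurable_fst.comp measurable_snd)).mul
      (meas_pair W measurable_fst (measurable_snd.comp measurable_snd))
  have hGint : Integrable (fun p : ℝ × (ℝ × ℝ) => W.W p.1 p.2.1 * W.W p.1 p.2.2) P := by
    refine integrableP hGm (C := 1) fun p h1 h2 h3 => ?_
    have b1 := W_bd W h1 h2; have b2 := W_bd W h1 h3
    have n1 := abs_nonneg (W.W p.1 p.2.1); have n2 := abs_nonneg (W.W p.1 p.2.2)
    calc |W.W p.1 p.2.1 * W.W p.1 p.2.2| = |W.W p.1 p.2.1| * |W.W p.1 p.2.2| := abs_mul _ _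
      _ ≤ 1 := mul_le_one₀ b1 n2 b2
  have hae : (fun p => Hf W p + Hf W (σ3 p)) =ᵐ[P]
      (fun p : ℝ × (ℝ × ℝ) => W.W p.1 p.2.1 * W.W p.1 p.2.2) := by
    filter_upwards [ae_box] with p hp
    have h := W.skew p.2.1 hp.2.1 p.2.2 hp.2.2
    simp only [Hf, σ3_apply]
    linear_combination (W.W p.1 p.2.1 * W.W p.1 p.2.2) * h
  have hinner : ∀ a : ℝ, (∫ q : ℝ × ℝ, W.W a q.1 * W.W a q.2 ∂(μ01.prod μ01)) = dW W a ^ 2 := by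
    intro a
    rw [integral_prod_mul (f := fun b => W.W a b) (g := fun c => W.W a c)]
    rw [dW, sq]
  calc 2 * tonDensity TT3 W = ∫ p, Hf W p ∂P + ∫ p, Hf W (σ3 p) ∂P := by
        rw [density_eq, ← hswap]; ring
    _ = ∫ p, (Hf W p + Hf W (σ3 p)) ∂P := (integral_add (Hf_int W) hintσ).symm
    _ = ∫ p : ℝ × (ℝ × ℝ), W.W p.1 p.2.1 * W.W p.1 p.2.2 ∂P := integral_congr_ae hae
    _ = ∫ a, ∫ q : ℝ × ℝ, W.W a q.1 * W.W a q.2 ∂(μ01.prod μ01) ∂μ01 :=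
        integral_prod _ hGint
    _ = ∫ a, dW W a ^ 2 ∂μ01 := by simp_rw [hinner]

lemma d_mean (W : Tournamenton) : ∫ a, dW W a ∂μ01 = 1/2 := by
  have hint : Integrable (fun q : ℝ × ℝ => W.W q.1 q.2) S2 := by
    refine integrableS2 (meas_pair W measurable_fst measurable_snd) fun q h1 h2 => W_bd W h1 h2
  have hint' : Integrable (fun q : ℝ × ℝ => W.W q.2 q.1) S2 := by
    refine integrableS2 (meas_pair W measurable_snd measurable_fst) fun q h1 h2 => W_bd W h2 h1
  have h1 : ∫ a, dW W a ∂μ01 = ∫ q : ℝ × ℝ, W.W q.1 q.2 ∂S2 :=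
    (integral_prod (μ := μ01) (ν := μ01) _ hint).symm
  have hcomm : MeasurePreserving (MeasurableEquiv.prodComm : ℝ × ℝ ≃ᵐ ℝ × ℝ) S2 S2 := by
    have h : MeasurePreserving (Prod.swap : ℝ × ℝ → ℝ × ℝ) (μ01.prod μ01) (μ01.prod μ01) :=
      Measure.measurePreserving_swap
    exact h
  have hswap : ∫ q : ℝ × ℝ, W.W q.1 q.2 ∂S2 = ∫ q : ℝ × ℝ, W.W q.2 q.1 ∂S2 := by
    exact hcomm.integral_comp' (fun q : ℝ × ℝ => W.W q.2 q.1)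
  have hone : ∫ q : ℝ × ℝ, (W.W q.1 q.2 + W.W q.2 q.1) ∂S2 = 1 := by
    have hae : (fun q : ℝ × ℝ => W.W q.1 q.2 + W.W q.2 q.1) =ᵐ[S2] fun _ => 1 := by
      filter_upwards [ae_box2] with q hq
      exact W.skew _ hq.1 _ hq.2
    rw [integral_congr_ae hae]; simp
  rw [integral_add hint hint'] at hone
  linarith [h1, hswap, hone]

end Stmt2Aux



/-- Every tournamenton `W` satisfies `t(TT₃, W) ≥ 1/8`, with equality iff `W` is regular. -/
theorem statement_2 (W : Tournamenton) :
    1/8 ≤ tonDensity TT3 W ∧ (tonDensity TT3 W = 1/8 ↔ W.Regular) := by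
  open Stmt2Aux in
  have hdm : Measurable (dW W) := dW_meas W
  have hint_d : Integrable (dW W) μ01 := integrableM hdm (fun a ha => dW_bd W ha)
  have hint_d2 : Integrable (fun a => dW W a ^ 2) μ01 := by
    refine integrableM (hdm.pow_const 2) (C := 1) fun a ha => ?_
    have := dW_bd W ha
    rw [abs_pow]
    calc |dW W a| ^ 2 ≤ 1 ^ 2 := pow_le_pow_left₀ (abs_nonneg _) this 2
      _ = 1 := one_pow 2
  have hint_v : Integrable (fun a => (dW W a - 1/2) ^ 2) μ01 := by
    refine integrableM ((hdm.sub measurable_const).pow_const 2) (C := 9/4) fun a ha => ?_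
    have := dW_bd W ha
    have h1 : |dW W a - 1/2| ≤ 3/2 := by
      rw [abs_le] at this ⊢; constructor <;> linarith [this.1, this.2]
    rw [abs_pow]
    calc |dW W a - 1/2| ^ 2 ≤ (3/2) ^ 2 := pow_le_pow_left₀ (abs_nonneg _) h1 2
      _ = 9/4 := by norm_num
  have hvar : ∫ a, (dW W a - 1/2) ^ 2 ∂μ01 = (∫ a, dW W a ^ 2 ∂μ01) - 1/4 := by
    have hfun : (fun a => (dW W a - 1/2) ^ 2)
        = fun a => (dW W a ^ 2 - dW W a) + 1/4 := by
      funext a; ring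
    have hsub : Integrable (fun a => dW W a ^ 2 - dW W a) μ01 := hint_d2.sub hint_d
    rw [hfun, integral_add hsub (integrable_const _),
      integral_sub hint_d2 hint_d, d_mean]
    simp
    ring
  have h2t := two_t W
  have hkey : tonDensity TT3 W - 1/8 = (1/2) * ∫ a, (dW W a - 1/2) ^ 2 ∂μ01 := by
    rw [hvar]; linarith
  have hnn : 0 ≤ ∫ a, (dW W a - 1/2) ^ 2 ∂μ01 := integral_nonneg fun a => sq_nonneg _
  have hreg_iff : W.Regular ↔ ∀ᵐ a ∂μ01, dW W a = 1/2 := Iff.rfl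
  refine ⟨by linarith, ?_, ?_⟩
  · intro heq
    have h0 : ∫ a, (dW W a - 1/2) ^ 2 ∂μ01 = 0 := by
      rw [heq] at hkey; linarith
    have hae := (integral_eq_zero_iff_of_nonneg (fun a => sq_nonneg _) hint_v).1 h0
    rw [hreg_iff]
    filter_upwards [hae] with a ha
    have h2 : (dW W a - 1/2) ^ 2 = 0 := ha
    have h3 : dW W a - 1/2 = 0 := by
      exact pow_eq_zero_iff (two_ne_zero) |>.1 h2
    linarith
  · intro hreg
    rw [hreg_iff] at hreg
    have hae : (fun a => (dW W a - 1/2) ^ 2) =ᵐ[μ01] fun _ => 0 := by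
      filter_upwards [hreg] with a ha
      rw [ha]; ring
    have h0 : ∫ a, (dW W a - 1/2) ^ 2 ∂μ01 = 0 := by
      rw [integral_congr_ae hae]; simp
    rw [h0] at hkey; linarith
end

section
/- Every tournamenton W satisfies t(C₃, W) ≤ 1/8, with equality if and only if W is regular. -/
open MeasureTheory Filter Topology

namespace QRaux
noncomputable def mu01 : Measure ℝ := volume.restrict (Set.Icc 0 1)

instance : IsProbabilityMeasure mu01 := ⟨by simp [mu01]⟩

variable (W : Tournamenton)

lemma tonC3 : tonDensity C3 W =
    ∫ x in Set.univ.pi (fun _ : Fin 3 => Set.Icc (0:ℝ) 1),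
      W.W (x 0) (x 1) * W.W (x 1) (x 2) * W.W (x 2) (x 0) := by
  show (∫ x in Set.univ.pi (fun _ : Fin 3 => Set.Icc (0:ℝ) 1),
      ∏ i : Fin 3, ∏ j : Fin 3, if C3.arc i j then W.W (x i) (x j) else 1) = _
  have h : ∀ x : Fin 3 → ℝ,
      (∏ i : Fin 3, ∏ j : Fin 3, if C3.arc i j then W.W (x i) (x j) else 1)
      = W.W (x 0) (x 1) * W.W (x 1) (x 2) * W.W (x 2) (x 0) := by
    intro x
    rw [Fin.prod_univ_three]
    rw [Fin.prod_univ_three, Fin.prod_univ_three, Fin.prod_univ_three]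
    rw [show C3.arc (0:Fin 3) (0:Fin 3) = false from rfl,
      show C3.arc (0:Fin 3) (1:Fin 3) = true from rfl,
      show C3.arc (0:Fin 3) (2:Fin 3) = false from rfl,
      show C3.arc (1:Fin 3) (0:Fin 3) = false from rfl,
      show C3.arc (1:Fin 3) (1:Fin 3) = false from rfl,
      show C3.arc (1:Fin 3) (2:Fin 3) = true from rfl,
      show C3.arc (2:Fin 3) (0:Fin 3) = true from rfl,
      show C3.arc (2:Fin 3) (1:Fin 3) = false from rfl,
      show C3.arc (2:Fin 3) (2:Fin 3) = false from rfl]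
    norm_num
  simp_rw [h]

lemma box_eq : ((volume : Measure (Fin 3 → ℝ)).restrict
    (Set.univ.pi fun _ : Fin 3 => Set.Icc (0:ℝ) 1)) = Measure.pi fun _ : Fin 3 => mu01 := by
  refine (Measure.pi_eq fun s hs => ?_).symm
  rw [Measure.restrict_apply (MeasurableSet.univ_pi hs), ← Set.pi_inter_distrib,
    volume_pi_pi]
  exact Finset.prod_congr rfl fun i _ => (Measure.restrict_apply (hs i)).symm

noncomputable def e3 : (Fin 3 → ℝ) ≃ᵐ ℝ × ℝ × ℝ :=
  (MeasurableEquiv.piFinSuccAbove (fun _ : Fin 3 => ℝ) 0).trans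
    ((MeasurableEquiv.refl ℝ).prodCongr
      ((MeasurableEquiv.piFinSuccAbove (fun _ : Fin 2 => ℝ) 0).trans
        ((MeasurableEquiv.refl ℝ).prodCongr (MeasurableEquiv.funUnique (Fin 1) ℝ))))

lemma e3_pres : MeasurePreserving (⇑e3) (Measure.pi fun _ : Fin 3 => mu01)
    (mu01.prod (mu01.prod mu01)) := by
  have h1 := measurePreserving_piFinSuccAbove (fun _ : Fin 3 => mu01) 0
  have h2 := measurePreserving_piFinSuccAbove (fun _ : Fin 2 => mu01) 0
  have h3 := measurePreserving_funUnique mu01 (Fin 1)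
  exact (((MeasurePreserving.id mu01).prod
    (((MeasurePreserving.id mu01).prod h3).comp h2)).comp h1)

lemma e3_apply (x : Fin 3 → ℝ) : e3 x = (x 0, x 1, x 2) := rfl

lemma tonC3'' : tonDensity C3 W =
    ∫ p, W.W p.1 p.2.1 * W.W p.2.1 p.2.2 * W.W p.2.2 p.1 ∂(mu01.prod (mu01.prod mu01)) := by
  rw [tonC3]
  rw [show (∫ x in Set.univ.pi (fun _ : Fin 3 => Set.Icc (0:ℝ) 1),
      W.W (x 0) (x 1) * W.W (x 1) (x 2) * W.W (x 2) (x 0)) =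
      ∫ x, W.W (x 0) (x 1) * W.W (x 1) (x 2) * W.W (x 2) (x 0)
        ∂(Measure.pi fun _ : Fin 3 => mu01) from by rw [← box_eq]]
  rw [← MeasurePreserving.integral_comp e3_pres e3.measurableEmbedding]
  simp only [e3_apply]


lemma hWm : Measurable (Function.uncurry W.W) := W.measurable

lemma measW {α : Type*} [MeasurableSpace α] {f g : α → ℝ} (hf : Measurable f)
    (hg : Measurable g) : Measurable fun a => W.W (f a) (g a) :=
  W.measurable.comp (hf.prodMk hg)

lemma wnorm {x y : ℝ} (hx : x ∈ Set.Icc (0:ℝ) 1) (hy : y ∈ Set.Icc (0:ℝ) 1) :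
    ‖W.W x y‖ ≤ 1 := by
  rw [Real.norm_eq_abs, abs_le]
  exact ⟨by linarith [W.nonneg x hx y hy], W.le_one x hx y hy⟩

lemma mulnorm {x y : ℝ} (hx : ‖x‖ ≤ 1) (hy : ‖y‖ ≤ 1) : ‖x * y‖ ≤ 1 := by
  calc ‖x * y‖ = ‖x‖ * ‖y‖ := norm_mul x y
  _ ≤ 1 * 1 := by
      exact mul_le_mul hx hy (norm_nonneg y) zero_le_one
  _ = 1 := one_mul 1

lemma intg {α : Type*} [MeasurableSpace α] {ν : Measure α} [IsFiniteMeasure ν] {f : α → ℝ}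
    (hm : AEStronglyMeasurable f ν) (h : ∀ᵐ a ∂ν, ‖f a‖ ≤ 1) : Integrable f ν :=
  Integrable.mono' (integrable_const 1) hm h

lemma ae1 : ∀ᵐ x ∂mu01, x ∈ Set.Icc (0:ℝ) 1 := ae_restrict_mem measurableSet_Icc

lemma ae2 : ∀ᵐ q : ℝ × ℝ ∂(mu01.prod mu01),
    q.1 ∈ Set.Icc (0:ℝ) 1 ∧ q.2 ∈ Set.Icc (0:ℝ) 1 := by
  have h : mu01.prod mu01
      = (volume.prod volume).restrict ((Set.Icc (0:ℝ) 1) ×ˢ (Set.Icc (0:ℝ) 1)) := by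
    rw [mu01, Measure.prod_restrict]
  rw [h]
  exact (ae_restrict_mem (measurableSet_Icc.prod measurableSet_Icc)).mono
    fun q hq => ⟨hq.1, hq.2⟩

lemma ae3 : ∀ᵐ p : ℝ × ℝ × ℝ ∂(mu01.prod (mu01.prod mu01)),
    p.1 ∈ Set.Icc (0:ℝ) 1 ∧ p.2.1 ∈ Set.Icc (0:ℝ) 1 ∧ p.2.2 ∈ Set.Icc (0:ℝ) 1 := by
  have h : mu01.prod (mu01.prod mu01) = (volume.prod (volume.prod volume)).restrict
      ((Set.Icc (0:ℝ) 1) ×ˢ ((Set.Icc (0:ℝ) 1) ×ˢ (Set.Icc (0:ℝ) 1))) := by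
    rw [mu01, Measure.prod_restrict, Measure.prod_restrict]
  rw [h]
  exact (ae_restrict_mem (measurableSet_Icc.prod
    (measurableSet_Icc.prod measurableSet_Icc))).mono fun p hp => ⟨hp.1, hp.2.1, hp.2.2⟩

noncomputable def dW (x : ℝ) : ℝ := ∫ y, W.W x y ∂mu01

lemma meas_dW : StronglyMeasurable (dW W) :=
  W.measurable.stronglyMeasurable.integral_prod_right'

lemma int_right {x : ℝ} (hx : x ∈ Set.Icc (0:ℝ) 1) : Integrable (fun y => W.W x y) mu01 :=
  intg ((measW W measurable_const measurable_id).aestronglyMeasurable)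
    (ae1.mono fun y hy => wnorm W hx hy)

lemma int_left {x : ℝ} (hx : x ∈ Set.Icc (0:ℝ) 1) : Integrable (fun y => W.W y x) mu01 :=
  intg ((measW W measurable_id measurable_const).aestronglyMeasurable)
    (ae1.mono fun y hy => wnorm W hy hx)

lemma dW_mem {x : ℝ} (hx : x ∈ Set.Icc (0:ℝ) 1) : dW W x ∈ Set.Icc (0:ℝ) 1 := by
  constructor
  · exact integral_nonneg_of_ae (ae1.mono fun y hy => W.nonneg x hx y hy)
  · calc dW W x ≤ ∫ _, (1:ℝ) ∂mu01 :=
        integral_mono_ae (int_right W hx) (integrable_const 1)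
          (ae1.mono fun y hy => W.le_one x hx y hy)
    _ = 1 := by simp

lemma dW_norm {x : ℝ} (hx : x ∈ Set.Icc (0:ℝ) 1) : ‖dW W x‖ ≤ 1 := by
  have h := dW_mem W hx
  rw [Real.norm_eq_abs, abs_le]
  exact ⟨by linarith [h.1], h.2⟩

lemma one_sub_dW_norm {x : ℝ} (hx : x ∈ Set.Icc (0:ℝ) 1) : ‖1 - dW W x‖ ≤ 1 := by
  have h := dW_mem W hx
  rw [Real.norm_eq_abs, abs_le]
  exact ⟨by linarith [h.2], by linarith [h.1]⟩

lemma int_flip {x : ℝ} (hx : x ∈ Set.Icc (0:ℝ) 1) :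
    ∫ y, W.W y x ∂mu01 = 1 - dW W x := by
  have h : (fun y => W.W y x) =ᵐ[mu01] fun y => 1 - W.W x y :=
    ae1.mono fun y hy => by
      have := W.skew x hx y hy
      show W.W y x = 1 - W.W x y
      linarith
  rw [integral_congr_ae h, integral_sub (integrable_const 1) (int_right W hx)]
  simp [dW]

lemma int_dW : Integrable (dW W) mu01 :=
  intg (meas_dW W).aestronglyMeasurable (ae1.mono fun x hx => dW_norm W hx)

lemma J_eq₁ : ∫ x, (∫ y, W.W y x ∂mu01) ∂mu01 = 1 - ∫ x, dW W x ∂mu01 := by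
  rw [integral_congr_ae (ae1.mono fun x hx => int_flip W hx),
    integral_sub (integrable_const 1) (int_dW W)]
  simp

lemma J_eq₂ : ∫ x, (∫ y, W.W y x ∂mu01) ∂mu01 = ∫ x, dW W x ∂mu01 := by
  have hint : Integrable (Function.uncurry fun x y => W.W y x) (mu01.prod mu01) :=
    intg ((measW W measurable_snd measurable_fst).aestronglyMeasurable)
      (ae2.mono fun q hq => wnorm W hq.2 hq.1)
  exact integral_integral_swap hint

lemma I_half : ∫ x, dW W x ∂mu01 = 1/2 := by
  have h1 := J_eq₁ W
  rw [J_eq₂ W] at h1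
  linarith

lemma hA : Integrable (fun p : ℝ × ℝ × ℝ => W.W p.1 p.2.1) (mu01.prod (mu01.prod mu01)) :=
  intg ((measW W measurable_fst (measurable_fst.comp measurable_snd)).aestronglyMeasurable)
    (ae3.mono fun p hp => wnorm W hp.1 hp.2.1)

lemma hB : Integrable (fun p : ℝ × ℝ × ℝ => W.W p.2.1 p.2.2) (mu01.prod (mu01.prod mu01)) :=
  intg ((measW W (measurable_fst.comp measurable_snd)
    (measurable_snd.comp measurable_snd)).aestronglyMeasurable)
    (ae3.mono fun p hp => wnorm W hp.2.1 hp.2.2)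

lemma hC : Integrable (fun p : ℝ × ℝ × ℝ => W.W p.2.2 p.1) (mu01.prod (mu01.prod mu01)) :=
  intg ((measW W (measurable_snd.comp measurable_snd) measurable_fst).aestronglyMeasurable)
    (ae3.mono fun p hp => wnorm W hp.2.2 hp.1)

lemma hAB : Integrable (fun p : ℝ × ℝ × ℝ => W.W p.1 p.2.1 * W.W p.2.1 p.2.2)
    (mu01.prod (mu01.prod mu01)) :=
  intg (((measW W measurable_fst (measurable_fst.comp measurable_snd)).mul
    (measW W (measurable_fst.comp measurable_snd)
      (measurable_snd.comp measurable_snd))).aestronglyMeasurable)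
    (ae3.mono fun p hp => mulnorm (wnorm W hp.1 hp.2.1) (wnorm W hp.2.1 hp.2.2))

lemma hBC : Integrable (fun p : ℝ × ℝ × ℝ => W.W p.2.1 p.2.2 * W.W p.2.2 p.1)
    (mu01.prod (mu01.prod mu01)) :=
  intg (((measW W (measurable_fst.comp measurable_snd)
    (measurable_snd.comp measurable_snd)).mul
    (measW W (measurable_snd.comp measurable_snd) measurable_fst)).aestronglyMeasurable)
    (ae3.mono fun p hp => mulnorm (wnorm W hp.2.1 hp.2.2) (wnorm W hp.2.2 hp.1))

lemma hCA : Integrable (fun p : ℝ × ℝ × ℝ => W.W p.2.2 p.1 * W.W p.1 p.2.1)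
    (mu01.prod (mu01.prod mu01)) :=
  intg (((measW W (measurable_snd.comp measurable_snd) measurable_fst).mul
    (measW W measurable_fst (measurable_fst.comp measurable_snd))).aestronglyMeasurable)
    (ae3.mono fun p hp => mulnorm (wnorm W hp.2.2 hp.1) (wnorm W hp.1 hp.2.1))

lemma MA : ∫ p : ℝ × ℝ × ℝ, W.W p.1 p.2.1 ∂(mu01.prod (mu01.prod mu01)) = 1/2 := by
  have h1 : ∫ p : ℝ × ℝ × ℝ, W.W p.1 p.2.1 ∂(mu01.prod (mu01.prod mu01))
      = ∫ a, (∫ q : ℝ × ℝ, W.W a q.1 ∂(mu01.prod mu01)) ∂mu01 := integral_prod _ (hA W)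
  have h2 : (fun a => ∫ q : ℝ × ℝ, W.W a q.1 ∂(mu01.prod mu01)) =ᵐ[mu01] dW W := by
    refine ae1.mono fun a ha => ?_
    have hi : Integrable (fun q : ℝ × ℝ => W.W a q.1) (mu01.prod mu01) :=
      intg ((measW W measurable_const measurable_fst).aestronglyMeasurable)
        (ae2.mono fun q hq => wnorm W ha hq.1)
    have h3 : ∫ q : ℝ × ℝ, W.W a q.1 ∂(mu01.prod mu01)
        = ∫ b, (∫ _, W.W a b ∂mu01) ∂mu01 := integral_prod _ hi
    show ∫ q : ℝ × ℝ, W.W a q.1 ∂(mu01.prod mu01) = dW W a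
    rw [h3]
    simp [dW]
  rw [h1, integral_congr_ae h2, I_half]

lemma MB : ∫ p : ℝ × ℝ × ℝ, W.W p.2.1 p.2.2 ∂(mu01.prod (mu01.prod mu01)) = 1/2 := by
  have hi : Integrable (fun q : ℝ × ℝ => W.W q.1 q.2) (mu01.prod mu01) :=
    intg ((measW W measurable_fst measurable_snd).aestronglyMeasurable)
      (ae2.mono fun q hq => wnorm W hq.1 hq.2)
  have h1 : ∫ p : ℝ × ℝ × ℝ, W.W p.2.1 p.2.2 ∂(mu01.prod (mu01.prod mu01))
      = ∫ _, (∫ q : ℝ × ℝ, W.W q.1 q.2 ∂(mu01.prod mu01)) ∂mu01 := integral_prod _ (hB W)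
  have h2 : ∫ q : ℝ × ℝ, W.W q.1 q.2 ∂(mu01.prod mu01)
      = ∫ b, (∫ c, W.W b c ∂mu01) ∂mu01 := integral_prod _ hi
  have h3 : ∫ b, (∫ c, W.W b c ∂mu01) ∂mu01 = 1/2 := I_half W
  rw [h1, h2, h3]
  simp

lemma MC : ∫ p : ℝ × ℝ × ℝ, W.W p.2.2 p.1 ∂(mu01.prod (mu01.prod mu01)) = 1/2 := by
  have h1 : ∫ p : ℝ × ℝ × ℝ, W.W p.2.2 p.1 ∂(mu01.prod (mu01.prod mu01))
      = ∫ a, (∫ q : ℝ × ℝ, W.W q.2 a ∂(mu01.prod mu01)) ∂mu01 := integral_prod _ (hC W)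
  have h2 : (fun a => ∫ q : ℝ × ℝ, W.W q.2 a ∂(mu01.prod mu01)) =ᵐ[mu01]
      (fun a => 1 - dW W a) := by
    refine ae1.mono fun a ha => ?_
    have hi : Integrable (fun q : ℝ × ℝ => W.W q.2 a) (mu01.prod mu01) :=
      intg ((measW W measurable_snd measurable_const).aestronglyMeasurable)
        (ae2.mono fun q hq => wnorm W hq.2 ha)
    have h3 : ∫ q : ℝ × ℝ, W.W q.2 a ∂(mu01.prod mu01)
        = ∫ _, (∫ c, W.W c a ∂mu01) ∂mu01 := integral_prod _ hi
    show ∫ q : ℝ × ℝ, W.W q.2 a ∂(mu01.prod mu01) = 1 - dW W a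
    rw [h3, int_flip W ha]
    simp
  rw [h1, integral_congr_ae h2,
    integral_sub (integrable_const 1) (int_dW W), I_half]
  norm_num

lemma meas_dWm : Measurable (dW W) := (meas_dW W).measurable

lemma MAB : ∫ p : ℝ × ℝ × ℝ, W.W p.1 p.2.1 * W.W p.2.1 p.2.2 ∂(mu01.prod (mu01.prod mu01))
    = ∫ x, (1 - dW W x) * dW W x ∂mu01 := by
  have h1 : ∫ p : ℝ × ℝ × ℝ, W.W p.1 p.2.1 * W.W p.2.1 p.2.2 ∂(mu01.prod (mu01.prod mu01))
      = ∫ a, (∫ q : ℝ × ℝ, W.W a q.1 * W.W q.1 q.2 ∂(mu01.prod mu01)) ∂mu01 :=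
    integral_prod _ (hAB W)
  have h2 : (fun a => ∫ q : ℝ × ℝ, W.W a q.1 * W.W q.1 q.2 ∂(mu01.prod mu01)) =ᵐ[mu01]
      (fun a => ∫ b, W.W a b * dW W b ∂mu01) := by
    refine ae1.mono fun a ha => ?_
    have hi : Integrable (fun q : ℝ × ℝ => W.W a q.1 * W.W q.1 q.2) (mu01.prod mu01) :=
      intg (((measW W measurable_const measurable_fst).mul
        (measW W measurable_fst measurable_snd)).aestronglyMeasurable)
        (ae2.mono fun q hq => mulnorm (wnorm W ha hq.1) (wnorm W hq.1 hq.2))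
    have h3 : ∫ q : ℝ × ℝ, W.W a q.1 * W.W q.1 q.2 ∂(mu01.prod mu01)
        = ∫ b, (∫ c, W.W a b * W.W b c ∂mu01) ∂mu01 := integral_prod _ hi
    show ∫ q : ℝ × ℝ, W.W a q.1 * W.W q.1 q.2 ∂(mu01.prod mu01)
        = ∫ b, W.W a b * dW W b ∂mu01
    rw [h3]
    refine integral_congr_ae (Filter.Eventually.of_forall fun b => ?_)
    show ∫ c, W.W a b * W.W b c ∂mu01 = W.W a b * dW W b
    exact integral_const_mul _ _
  rw [h1, integral_congr_ae h2]
  have hswap : Integrable (Function.uncurry fun a b => W.W a b * dW W b)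
      (mu01.prod mu01) :=
    intg (((measW W measurable_fst measurable_snd).mul
      ((meas_dWm W).comp measurable_snd)).aestronglyMeasurable)
      (ae2.mono fun q hq => mulnorm (wnorm W hq.1 hq.2) (dW_norm W hq.2))
  have h4 : ∫ a, (∫ b, W.W a b * dW W b ∂mu01) ∂mu01
      = ∫ b, (∫ a, W.W a b * dW W b ∂mu01) ∂mu01 := integral_integral_swap hswap
  rw [h4]
  refine integral_congr_ae (ae1.mono fun b hb => ?_)
  show ∫ a, W.W a b * dW W b ∂mu01 = (1 - dW W b) * dW W b
  rw [integral_mul_const, int_flip W hb]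

lemma MCA : ∫ p : ℝ × ℝ × ℝ, W.W p.2.2 p.1 * W.W p.1 p.2.1 ∂(mu01.prod (mu01.prod mu01))
    = ∫ x, (1 - dW W x) * dW W x ∂mu01 := by
  have h1 : ∫ p : ℝ × ℝ × ℝ, W.W p.2.2 p.1 * W.W p.1 p.2.1 ∂(mu01.prod (mu01.prod mu01))
      = ∫ a, (∫ q : ℝ × ℝ, W.W q.2 a * W.W a q.1 ∂(mu01.prod mu01)) ∂mu01 :=
    integral_prod _ (hCA W)
  rw [h1]
  refine integral_congr_ae (ae1.mono fun a ha => ?_)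
  have hi : Integrable (fun q : ℝ × ℝ => W.W q.2 a * W.W a q.1) (mu01.prod mu01) :=
    intg (((measW W measurable_snd measurable_const).mul
      (measW W measurable_const measurable_fst)).aestronglyMeasurable)
      (ae2.mono fun q hq => mulnorm (wnorm W hq.2 ha) (wnorm W ha hq.1))
  have h3 : ∫ q : ℝ × ℝ, W.W q.2 a * W.W a q.1 ∂(mu01.prod mu01)
      = ∫ b, (∫ c, W.W c a * W.W a b ∂mu01) ∂mu01 := integral_prod _ hi
  show ∫ q : ℝ × ℝ, W.W q.2 a * W.W a q.1 ∂(mu01.prod mu01) = (1 - dW W a) * dW W a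
  rw [h3]
  have h4 : (fun b => ∫ c, W.W c a * W.W a b ∂mu01) = fun b => (1 - dW W a) * W.W a b := by
    funext b
    rw [integral_mul_const, int_flip W ha]
  rw [h4, integral_const_mul]
  rfl

lemma MBC : ∫ p : ℝ × ℝ × ℝ, W.W p.2.1 p.2.2 * W.W p.2.2 p.1 ∂(mu01.prod (mu01.prod mu01))
    = ∫ x, (1 - dW W x) * dW W x ∂mu01 := by
  have h1 : ∫ p : ℝ × ℝ × ℝ, W.W p.2.1 p.2.2 * W.W p.2.2 p.1 ∂(mu01.prod (mu01.prod mu01))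
      = ∫ a, (∫ q : ℝ × ℝ, W.W q.1 q.2 * W.W q.2 a ∂(mu01.prod mu01)) ∂mu01 :=
    integral_prod _ (hBC W)
  rw [h1]
  have h2 : (fun a => ∫ q : ℝ × ℝ, W.W q.1 q.2 * W.W q.2 a ∂(mu01.prod mu01)) =ᵐ[mu01]
      (fun a => ∫ b, (1 - dW W b) * W.W b a ∂mu01) := by
    refine ae1.mono fun a ha => ?_
    have hsw : ∫ q : ℝ × ℝ, W.W q.1 q.2 * W.W q.2 a ∂(mu01.prod mu01)
        = ∫ q : ℝ × ℝ, W.W q.2 q.1 * W.W q.1 a ∂(mu01.prod mu01) :=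
      (MeasurePreserving.integral_comp Measure.measurePreserving_swap
        (MeasurableEquiv.prodComm (α := ℝ) (β := ℝ)).measurableEmbedding
        (fun q : ℝ × ℝ => W.W q.1 q.2 * W.W q.2 a)).symm
    have hi : Integrable (fun q : ℝ × ℝ => W.W q.2 q.1 * W.W q.1 a) (mu01.prod mu01) :=
      intg (((measW W measurable_snd measurable_fst).mul
        (measW W measurable_fst measurable_const)).aestronglyMeasurable)
        (ae2.mono fun q hq => mulnorm (wnorm W hq.2 hq.1) (wnorm W hq.1 ha))
    have h3 : ∫ q : ℝ × ℝ, W.W q.2 q.1 * W.W q.1 a ∂(mu01.prod mu01)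
        = ∫ b, (∫ c, W.W c b * W.W b a ∂mu01) ∂mu01 := integral_prod _ hi
    show ∫ q : ℝ × ℝ, W.W q.1 q.2 * W.W q.2 a ∂(mu01.prod mu01)
        = ∫ b, (1 - dW W b) * W.W b a ∂mu01
    rw [hsw, h3]
    refine integral_congr_ae (ae1.mono fun b hb => ?_)
    show ∫ c, W.W c b * W.W b a ∂mu01 = (1 - dW W b) * W.W b a
    rw [integral_mul_const, int_flip W hb]
  rw [integral_congr_ae h2]
  have hswap : Integrable (Function.uncurry fun a b => (1 - dW W b) * W.W b a)
      (mu01.prod mu01) :=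
    intg (((measurable_const.sub ((meas_dWm W).comp measurable_snd)).mul
      (measW W measurable_snd measurable_fst)).aestronglyMeasurable)
      (ae2.mono fun q hq => mulnorm (one_sub_dW_norm W hq.2) (wnorm W hq.2 hq.1))
  have h4 : ∫ a, (∫ b, (1 - dW W b) * W.W b a ∂mu01) ∂mu01
      = ∫ b, (∫ a, (1 - dW W b) * W.W b a ∂mu01) ∂mu01 := integral_integral_swap hswap
  rw [h4]
  refine integral_congr_ae (Filter.Eventually.of_forall fun b => ?_)
  show ∫ a, (1 - dW W b) * W.W b a ∂mu01 = (1 - dW W b) * dW W b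
  rw [integral_const_mul]
  rfl

noncomputable def tau : ℝ × ℝ × ℝ ≃ᵐ ℝ × ℝ × ℝ :=
  (MeasurableEquiv.prodAssoc (α := ℝ) (β := ℝ) (γ := ℝ)).symm.trans
    ((MeasurableEquiv.prodComm (α := ℝ × ℝ) (β := ℝ)).trans
      ((MeasurableEquiv.refl ℝ).prodCongr (MeasurableEquiv.prodComm (α := ℝ) (β := ℝ))))

lemma tau_apply (p : ℝ × ℝ × ℝ) : tau p = (p.2.2, p.2.1, p.1) := rfl

lemma tau_pres : MeasurePreserving (⇑tau) (mu01.prod (mu01.prod mu01))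
    (mu01.prod (mu01.prod mu01)) := by
  have h1 : MeasurePreserving (⇑(MeasurableEquiv.prodAssoc (α := ℝ) (β := ℝ) (γ := ℝ)).symm)
      (mu01.prod (mu01.prod mu01)) ((mu01.prod mu01).prod mu01) :=
    MeasurePreserving.symm _ (measurePreserving_prodAssoc mu01 mu01 mu01)
  exact ((MeasurePreserving.id mu01).prod Measure.measurePreserving_swap).comp
    (Measure.measurePreserving_swap.comp h1)

lemma Srev : ∫ p : ℝ × ℝ × ℝ, W.W p.2.2 p.2.1 * W.W p.2.1 p.1 * W.W p.1 p.2.2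
      ∂(mu01.prod (mu01.prod mu01))
    = ∫ p : ℝ × ℝ × ℝ, W.W p.1 p.2.1 * W.W p.2.1 p.2.2 * W.W p.2.2 p.1
      ∂(mu01.prod (mu01.prod mu01)) := by
  have h := MeasurePreserving.integral_comp (tau_pres) tau.measurableEmbedding
    (fun p : ℝ × ℝ × ℝ => W.W p.1 p.2.1 * W.W p.2.1 p.2.2 * W.W p.2.2 p.1)
  have h2 : (fun p : ℝ × ℝ × ℝ =>
      (fun p : ℝ × ℝ × ℝ => W.W p.1 p.2.1 * W.W p.2.1 p.2.2 * W.W p.2.2 p.1) (tau p))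
      = fun p : ℝ × ℝ × ℝ => W.W p.2.2 p.2.1 * W.W p.2.1 p.1 * W.W p.1 p.2.2 := rfl
  rw [← h, h2]

lemma hg3 : Integrable (fun p : ℝ × ℝ × ℝ => W.W p.1 p.2.1 * W.W p.2.1 p.2.2 * W.W p.2.2 p.1)
    (mu01.prod (mu01.prod mu01)) :=
  intg ((((measW W measurable_fst (measurable_fst.comp measurable_snd)).mul
    (measW W (measurable_fst.comp measurable_snd) (measurable_snd.comp measurable_snd))).mul
    (measW W (measurable_snd.comp measurable_snd) measurable_fst)).aestronglyMeasurable)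
    (ae3.mono fun p hp => mulnorm
      (mulnorm (wnorm W hp.1 hp.2.1) (wnorm W hp.2.1 hp.2.2)) (wnorm W hp.2.2 hp.1))

lemma hgrev : Integrable
    (fun p : ℝ × ℝ × ℝ => W.W p.2.2 p.2.1 * W.W p.2.1 p.1 * W.W p.1 p.2.2)
    (mu01.prod (mu01.prod mu01)) :=
  intg ((((measW W (measurable_snd.comp measurable_snd)
    (measurable_fst.comp measurable_snd)).mul
    (measW W (measurable_fst.comp measurable_snd) measurable_fst)).mul
    (measW W measurable_fst (measurable_snd.comp measurable_snd))).aestronglyMeasurable)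
    (ae3.mono fun p hp => mulnorm
      (mulnorm (wnorm W hp.2.2 hp.2.1) (wnorm W hp.2.1 hp.1)) (wnorm W hp.1 hp.2.2))

lemma two_S : tonDensity C3 W + tonDensity C3 W
    = 1 - 1/2 - 1/2 - 1/2
      + ((∫ x, (1 - dW W x) * dW W x ∂mu01) + (∫ x, (1 - dW W x) * dW W x ∂mu01)
        + (∫ x, (1 - dW W x) * dW W x ∂mu01)) := by
  have hsum : tonDensity C3 W + tonDensity C3 W
      = ∫ p : ℝ × ℝ × ℝ, ((((1 - W.W p.1 p.2.1) - W.W p.2.1 p.2.2) - W.W p.2.2 p.1)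
          + ((W.W p.1 p.2.1 * W.W p.2.1 p.2.2 + W.W p.2.1 p.2.2 * W.W p.2.2 p.1)
            + W.W p.2.2 p.1 * W.W p.1 p.2.1)) ∂(mu01.prod (mu01.prod mu01)) := by
    rw [tonC3'' W]
    nth_rewrite 2 [← Srev W]
    rw [← integral_add (hg3 W) (hgrev W)]
    refine integral_congr_ae (ae3.mono fun p hp => ?_)
    have e1 : W.W p.2.2 p.2.1 = 1 - W.W p.2.1 p.2.2 := by
      have := W.skew _ hp.2.1 _ hp.2.2; linarith
    have e2 : W.W p.2.1 p.1 = 1 - W.W p.1 p.2.1 := by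
      have := W.skew _ hp.1 _ hp.2.1; linarith
    have e3' : W.W p.1 p.2.2 = 1 - W.W p.2.2 p.1 := by
      have := W.skew _ hp.2.2 _ hp.1; linarith
    show W.W p.1 p.2.1 * W.W p.2.1 p.2.2 * W.W p.2.2 p.1
        + W.W p.2.2 p.2.1 * W.W p.2.1 p.1 * W.W p.1 p.2.2 = _
    rw [e1, e2, e3']
    ring
  rw [hsum]
  have s1 := integral_add (μ := mu01.prod (mu01.prod mu01))
    (f := fun p : ℝ × ℝ × ℝ => ((1 - W.W p.1 p.2.1) - W.W p.2.1 p.2.2) - W.W p.2.2 p.1)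
    (g := fun p : ℝ × ℝ × ℝ => (W.W p.1 p.2.1 * W.W p.2.1 p.2.2
      + W.W p.2.1 p.2.2 * W.W p.2.2 p.1) + W.W p.2.2 p.1 * W.W p.1 p.2.1)
    ((((integrable_const 1).sub (hA W)).sub (hB W)).sub (hC W))
    (((hAB W).add (hBC W)).add (hCA W))
  have s2 := integral_sub (μ := mu01.prod (mu01.prod mu01))
    (f := fun p : ℝ × ℝ × ℝ => (1 - W.W p.1 p.2.1) - W.W p.2.1 p.2.2)
    (g := fun p : ℝ × ℝ × ℝ => W.W p.2.2 p.1)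
    (((integrable_const 1).sub (hA W)).sub (hB W)) (hC W)
  have s3 := integral_sub (μ := mu01.prod (mu01.prod mu01))
    (f := fun p : ℝ × ℝ × ℝ => 1 - W.W p.1 p.2.1)
    (g := fun p : ℝ × ℝ × ℝ => W.W p.2.1 p.2.2)
    ((integrable_const 1).sub (hA W)) (hB W)
  have s4 := integral_sub (μ := mu01.prod (mu01.prod mu01))
    (f := fun _ : ℝ × ℝ × ℝ => (1:ℝ))
    (g := fun p : ℝ × ℝ × ℝ => W.W p.1 p.2.1)
    (integrable_const 1) (hA W)
  have s5 := integral_add (μ := mu01.prod (mu01.prod mu01))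
    (f := fun p : ℝ × ℝ × ℝ => W.W p.1 p.2.1 * W.W p.2.1 p.2.2
      + W.W p.2.1 p.2.2 * W.W p.2.2 p.1)
    (g := fun p : ℝ × ℝ × ℝ => W.W p.2.2 p.1 * W.W p.1 p.2.1)
    ((hAB W).add (hBC W)) (hCA W)
  have s6 := integral_add (μ := mu01.prod (mu01.prod mu01))
    (f := fun p : ℝ × ℝ × ℝ => W.W p.1 p.2.1 * W.W p.2.1 p.2.2)
    (g := fun p : ℝ × ℝ × ℝ => W.W p.2.1 p.2.2 * W.W p.2.2 p.1)
    (hAB W) (hBC W)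
  rw [s1, s2, s3, s4, s5, s6, MA W, MB W, MC W, MAB W, MBC W, MCA W]
  simp

lemma int_dW2 : Integrable (fun x => dW W x * dW W x) mu01 :=
  intg (((meas_dWm W).mul (meas_dWm W)).aestronglyMeasurable)
    (ae1.mono fun x hx => mulnorm (dW_norm W hx) (dW_norm W hx))

lemma intV : Integrable (fun x => (dW W x - 1/2)^2) mu01 := by
  refine intg ((((meas_dWm W).sub measurable_const).pow_const 2).aestronglyMeasurable)
    (ae1.mono fun x hx => ?_)
  have h := dW_mem W hx
  rw [Real.norm_eq_abs, abs_le]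
  constructor
  · nlinarith [sq_nonneg (dW W x - 1/2)]
  · nlinarith [h.1, h.2]

lemma D_eq : ∫ x, (1 - dW W x) * dW W x ∂mu01
    = 1/2 - ∫ x, dW W x * dW W x ∂mu01 := by
  have h : ∫ x, (1 - dW W x) * dW W x ∂mu01
      = ∫ x, (dW W x - dW W x * dW W x) ∂mu01 :=
    integral_congr_ae (Filter.Eventually.of_forall fun x => by ring)
  have s := integral_sub (μ := mu01) (f := fun x => dW W x)
    (g := fun x => dW W x * dW W x) (int_dW W) (int_dW2 W)
  rw [h, s, I_half]

lemma V_eq : ∫ x, (dW W x - 1/2)^2 ∂mu01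
    = (∫ x, dW W x * dW W x ∂mu01) - 1/4 := by
  have h : ∫ x, (dW W x - 1/2)^2 ∂mu01
      = ∫ x, ((dW W x * dW W x - dW W x) + 1/4) ∂mu01 :=
    integral_congr_ae (Filter.Eventually.of_forall fun x => by ring)
  have v1 := integral_add (μ := mu01) (f := fun x => dW W x * dW W x - dW W x)
    (g := fun _ => (1/4 : ℝ)) ((int_dW2 W).sub (int_dW W)) (integrable_const _)
  have v2 := integral_sub (μ := mu01) (f := fun x => dW W x * dW W x)
    (g := fun x => dW W x) (int_dW2 W) (int_dW W)
  rw [h, v1, v2, I_half, integral_const]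
  simp
  ring

lemma key : tonDensity C3 W = 1/8 - (3/2) * ∫ x, (dW W x - 1/2)^2 ∂mu01 := by
  linarith [two_S W, D_eq W, V_eq W]

lemma reg_iff : W.Regular ↔ ∀ᵐ x ∂mu01, dW W x = 1/2 := Iff.rfl

end QRaux


/-- Every tournamenton `W` satisfies `t(C₃, W) ≤ 1/8`, with equality iff `W` is regular. -/
theorem statement_4 (W : Tournamenton) :
    tonDensity C3 W ≤ 1/8 ∧ (tonDensity C3 W = 1/8 ↔ W.Regular) := by
  open QRaux in
  have hkey := QRaux.key W
  have hV0 : 0 ≤ ∫ x, (QRaux.dW W x - 1/2)^2 ∂QRaux.mu01 :=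
    integral_nonneg fun x => sq_nonneg _
  refine ⟨by linarith, ?_, ?_⟩
  · intro h
    have hz : ∫ x, (QRaux.dW W x - 1/2)^2 ∂QRaux.mu01 = 0 := by linarith
    have hae := (integral_eq_zero_iff_of_nonneg (fun x => sq_nonneg _) (QRaux.intV W)).mp hz
    rw [QRaux.reg_iff]
    refine hae.mono fun x hx => ?_
    have h1 : (QRaux.dW W x - 1/2)^2 = 0 := hx
    have h2 : QRaux.dW W x - 1/2 = 0 := by
      exact pow_eq_zero_iff (by norm_num) |>.mp h1
    linarith
  · intro hreg
    have h0 : (fun x => (QRaux.dW W x - 1/2)^2) =ᵐ[QRaux.mu01] (fun _ => (0:ℝ)) :=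
      ((QRaux.reg_iff W).mp hreg).mono fun x hx => by
        show (QRaux.dW W x - 1/2)^2 = (0:ℝ)
        rw [hx]; ring
    have hz : ∫ x, (QRaux.dW W x - 1/2)^2 ∂QRaux.mu01 = 0 := by
      rw [integral_congr_ae h0]; simp
    linarith
end

section
/- Every sequence (T_n)_{n∈ℕ} of tournaments with v(T_n) → ∞ satisfies liminf_{n→∞} t(TT₃, T_n) ≥ 1/8; moreover, such a sequence is nearly regular if and only if lim_{n→∞} t(TT₃, T_n) = 1/8. -/
open MeasureTheory Filter Topology

open Finset in
lemma outDeg_eq_card (T : Tournament) (v : Fin T.n) :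
    outDeg T v = (univ.filter (fun j => T.arc v j = true)).card := by
  rw [outDeg, Nat.card_eq_fintype_card, Fintype.card_subtype]

open Finset in
lemma pair_count (T : Tournament) (O : Finset (Fin T.n)) :
    2 * (∑ b ∈ O, ∑ c ∈ O, if T.arc b c then 1 else 0) + O.card = O.card * O.card := by
  have key : ∀ b ∈ O, ∀ c ∈ O,
      ((if T.arc b c then 1 else 0) + (if T.arc c b then 1 else 0))
        + (if b = c then 1 else 0) = 1 := by
    intro b _ c _
    rcases eq_or_ne b c with rfl | h
    · simp [T.irrefl b]
    · have := T.total b c h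
      rcases hbc : T.arc c b with _ | _ <;> simp [this, hbc, h]
  have h1 : ∑ b ∈ O, ∑ c ∈ O, (((if T.arc b c then 1 else 0) + (if T.arc c b then 1 else 0))
        + (if b = c then 1 else 0)) = O.card * O.card := by
    rw [Finset.sum_congr rfl (fun b hb => Finset.sum_congr rfl (fun c hc => key b hb c hc))]
    simp [mul_comm]
  have h2 : ∑ b ∈ O, ∑ c ∈ O, ((if T.arc c b then (1:ℕ) else 0)) =
      ∑ b ∈ O, ∑ c ∈ O, ((if T.arc b c then (1:ℕ) else 0)) := Finset.sum_comm
  have h3 : ∑ b ∈ O, ∑ c ∈ O, (if b = c then (1:ℕ) else 0) = O.card := by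
    simp [Finset.sum_ite_eq O]
  simp only [Finset.sum_add_distrib] at h1
  rw [h2, h3] at h1
  omega
open Finset in
lemma deg_sum (T : Tournament) :
    2 * (∑ v, outDeg T v) + T.n = T.n * T.n := by
  have h : ∑ v, outDeg T v = ∑ v : Fin T.n, ∑ j : Fin T.n, if T.arc v j then 1 else 0 := by
    refine Finset.sum_congr rfl (fun v _ => ?_)
    rw [outDeg_eq_card]
    rw [Finset.card_filter]
  rw [h]
  have h2 := pair_count T (univ : Finset (Fin T.n))
  rwa [Finset.card_univ, Fintype.card_fin] at h2
lemma TT3_hom_iff (T : Tournament) (f : Fin 3 → Fin T.n) :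
    (∀ i j, TT3.arc i j → T.arc (f i) (f j)) ↔
      (T.arc (f 0) (f 1) ∧ T.arc (f 0) (f 2) ∧ T.arc (f 1) (f 2)) := by
  constructor
  · intro h
    exact ⟨h (0:Fin 3) (1:Fin 3) (by decide), h (0:Fin 3) (2:Fin 3) (by decide), h (1:Fin 3) (2:Fin 3) (by decide)⟩
  · rintro ⟨h1, h2, h3⟩ i j hij
    fin_cases i <;> fin_cases j <;> simp_all [TT3]

open Finset in
lemma homCount_TT3 (T : Tournament) :
    homCount TT3 T = ∑ a : Fin T.n, ∑ b : Fin T.n, ∑ c : Fin T.n,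
      if (T.arc a b ∧ T.arc a c ∧ T.arc b c) then 1 else 0 := by
  classical
  have e : {f : Fin 3 → Fin T.n // ∀ i j, TT3.arc i j → T.arc (f i) (f j)} ≃
      {t : Fin T.n × Fin T.n × Fin T.n //
        T.arc t.1 t.2.1 ∧ T.arc t.1 t.2.2 ∧ T.arc t.2.1 t.2.2} :=
    { toFun := fun x => ⟨(x.1 0, x.1 1, x.1 2), (TT3_hom_iff T x.1).1 x.2⟩
      invFun := fun x => ⟨![x.1.1, x.1.2.1, x.1.2.2],
        (TT3_hom_iff T ![x.1.1, x.1.2.1, x.1.2.2]).2 x.2⟩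
      left_inv := by
        rintro ⟨f, h⟩
        ext i
        fin_cases i <;> rfl
      right_inv := by rintro ⟨⟨a, b, c⟩, h⟩; rfl }
  have h0 : homCount TT3 T =
      Nat.card {f : Fin 3 → Fin T.n // ∀ i j, TT3.arc i j → T.arc (f i) (f j)} := rfl
  rw [h0, Nat.card_congr e, Nat.card_eq_fintype_card, Fintype.card_subtype]
  rw [Finset.card_filter]
  rw [Fintype.sum_prod_type]
  refine Finset.sum_congr rfl (fun a _ => ?_)
  rw [Fintype.sum_prod_type]
open Finset in
lemma hom_deg (T : Tournament) :
    2 * homCount TT3 T + ∑ v, outDeg T v = ∑ v, (outDeg T v)^2 := by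
  classical
  rw [homCount_TT3, Finset.mul_sum, ← Finset.sum_add_distrib]
  refine Finset.sum_congr rfl (fun a _ => ?_)
  set O := univ.filter (fun j => T.arc a j = true) with hO
  have hinner : (∑ b : Fin T.n, ∑ c : Fin T.n,
        if (T.arc a b ∧ T.arc a c ∧ T.arc b c) then 1 else 0)
      = ∑ b ∈ O, ∑ c ∈ O, if T.arc b c then 1 else 0 := by
    rw [Finset.sum_filter]
    refine Finset.sum_congr rfl (fun b _ => ?_)
    rw [Finset.sum_filter]
    by_cases hab : T.arc a b = true
    · simp only [hab, if_true]
      refine Finset.sum_congr rfl (fun c _ => ?_)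
      by_cases hac : T.arc a c = true <;> simp [hab, hac]
    · simp [hab]
  rw [hinner, outDeg_eq_card, ← hO, pow_two]
  exact pair_count T O
/-- Normalized degree variance. -/
noncomputable def eT (T : Tournament) : ℝ :=
  (∑ v, ((outDeg T v : ℝ) - (T.n : ℝ)/2)^2) / (T.n : ℝ)^3

open Finset in
lemma eT_nonneg (T : Tournament) : 0 ≤ eT T := by
  apply div_nonneg
  · exact Finset.sum_nonneg fun v _ => sq_nonneg _
  · positivity

open Finset in
lemma density_eq (T : Tournament) (hN : 0 < T.n) :
    homDensity TT3 T =
      eT T / 2 + 1/8 - 1/(2*(T.n:ℝ)) + 1/(4*(T.n:ℝ)^2) := by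
  classical
  set N : ℝ := (T.n : ℝ) with hNdef
  have hN' : (0:ℝ) < N := by rw [hNdef]; exact_mod_cast hN
  set A : ℝ := (homCount TT3 T : ℝ) with hAdef
  set D : ℝ := ∑ v, (outDeg T v : ℝ) with hDdef
  set Q : ℝ := ∑ v, (outDeg T v : ℝ)^2 with hQdef
  set S : ℝ := ∑ v, ((outDeg T v : ℝ) - N/2)^2 with hSdef
  have h1 : 2*A + D = Q := by
    have := hom_deg T
    have : ((2 * homCount TT3 T + ∑ v, outDeg T v : ℕ) : ℝ)
        = ((∑ v, (outDeg T v)^2 : ℕ) : ℝ) := by exact_mod_cast this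
    push_cast at this
    simpa [hAdef, hDdef, hQdef] using this
  have h2 : 2*D + N = N^2 := by
    have := deg_sum T
    have : ((2 * (∑ v, outDeg T v) + T.n : ℕ) : ℝ) = ((T.n * T.n : ℕ) : ℝ) := by
      exact_mod_cast this
    push_cast at this
    rw [hDdef, hNdef, pow_two]; exact this
  have h3 : S = Q - N*D + N*N^2/4 := by
    rw [hSdef, hQdef, hDdef]
    have hcard : ((univ : Finset (Fin T.n)).card : ℝ) = N := by
      simp [hNdef]
    rw [Finset.sum_congr rfl
      (fun v _ => (by ring : ((outDeg T v : ℝ) - N/2)^2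
        = (outDeg T v : ℝ)^2 - N*(outDeg T v : ℝ) + N^2/4))]
    rw [Finset.sum_add_distrib, Finset.sum_sub_distrib, ← Finset.mul_sum,
      Finset.sum_const, nsmul_eq_mul, hcard]
    ring
  have hA' : A = S/2 + N^3/8 - N^2/2 + N/4 := by
    linear_combination h1/2 + (2*N-2)/8*h2 + (-1/2)*h3
  have hgoal : homDensity TT3 T = A / N^3 := rfl
  rw [hgoal, hA', eT, ← hSdef, ← hNdef]
  field_simp
lemma homDensity_nonneg (H T : Tournament) : 0 ≤ homDensity H T := by
  rw [homDensity]; positivity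

lemma homCount_le (H T : Tournament) : homCount H T ≤ T.n ^ H.n := by
  classical
  calc homCount H T = Fintype.card {f : Fin H.n → Fin T.n //
        ∀ i j, H.arc i j → T.arc (f i) (f j)} := Nat.card_eq_fintype_card
    _ ≤ Fintype.card (Fin H.n → Fin T.n) := Fintype.card_subtype_le _
    _ = T.n ^ H.n := by rw [Fintype.card_fun]; simp

lemma homDensity_le_one (H T : Tournament) : homDensity H T ≤ 1 := by
  rcases eq_or_ne ((T.n:ℝ)^H.n) 0 with h0 | h0
  · rw [homDensity, h0, div_zero]; norm_num
  · rw [homDensity, div_le_one (lt_of_le_of_ne (by positivity) (Ne.symm h0))]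
    exact_mod_cast homCount_le H T

open Finset in
lemma outDeg_le (T : Tournament) (v : Fin T.n) : outDeg T v ≤ T.n := by
  rw [outDeg_eq_card]
  calc (univ.filter (fun j => T.arc v j = true)).card ≤ (univ : Finset (Fin T.n)).card :=
        Finset.card_filter_le _ _
    _ = T.n := by simp
open Finset in
lemma nat_card_filter {n : ℕ} (p : Fin n → Prop) [DecidablePred p] :
    Nat.card {v : Fin n // p v} = (univ.filter p).card := by
  rw [Nat.card_eq_fintype_card]
  exact Fintype.card_subtype p

open Finset in
lemma eT_le_of_bad (T : Tournament) {δ : ℝ} (hδ : 0 < δ)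
    (h : (Nat.card {v : Fin T.n // ¬((1/2 - δ) * ((T.n) : ℝ) ≤ (outDeg T v : ℝ) ∧
          (outDeg T v : ℝ) ≤ (1/2 + δ) * ((T.n) : ℝ))} : ℝ) ≤ δ * ((T.n) : ℝ)) :
    eT T ≤ δ^2 + δ := by
  classical
  rcases Nat.eq_zero_or_pos T.n with h0 | h0
  · have he : eT T = 0 := by rw [eT]; simp [h0]
    rw [he]; positivity
  · have hN : (0:ℝ) < (T.n : ℝ) := by exact_mod_cast h0
    rw [nat_card_filter] at h
    rw [eT, div_le_iff₀ (pow_pos hN 3)]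
    set p : Fin T.n → Prop := fun v => (1/2 - δ) * ((T.n) : ℝ) ≤ (outDeg T v : ℝ) ∧
          (outDeg T v : ℝ) ≤ (1/2 + δ) * ((T.n) : ℝ) with hp
    have hsplit := Finset.sum_filter_add_sum_filter_not univ p
      (fun v => ((outDeg T v : ℝ) - (T.n : ℝ)/2)^2)
    have hgood : ∑ v ∈ univ.filter p, ((outDeg T v : ℝ) - (T.n:ℝ)/2)^2
        ≤ (T.n:ℝ) * (δ*(T.n:ℝ))^2 := by
      calc ∑ v ∈ univ.filter p, ((outDeg T v : ℝ) - (T.n:ℝ)/2)^2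
          ≤ (univ.filter p).card • ((δ*(T.n:ℝ))^2) := by
            refine Finset.sum_le_card_nsmul _ _ _ (fun v hv => ?_)
            rw [Finset.mem_filter] at hv
            obtain ⟨-, h1, h2⟩ := hv
            apply sq_le_sq' <;> nlinarith
        _ = ((univ.filter p).card : ℝ) * (δ*(T.n:ℝ))^2 := by rw [nsmul_eq_mul]
        _ ≤ (T.n:ℝ) * (δ*(T.n:ℝ))^2 := by
            apply mul_le_mul_of_nonneg_right _ (by positivity)
            calc ((univ.filter p).card : ℝ) ≤ ((univ : Finset (Fin T.n)).card : ℝ) := by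
                  exact_mod_cast Finset.card_filter_le _ _
              _ = (T.n:ℝ) := by simp
    have hbad : ∑ v ∈ univ.filter (fun v => ¬ p v), ((outDeg T v : ℝ) - (T.n:ℝ)/2)^2
        ≤ (δ*(T.n:ℝ)) * (T.n:ℝ)^2 := by
      calc ∑ v ∈ univ.filter (fun v => ¬ p v), ((outDeg T v : ℝ) - (T.n:ℝ)/2)^2
          ≤ (univ.filter (fun v => ¬ p v)).card • ((T.n:ℝ)^2) := by
            refine Finset.sum_le_card_nsmul _ _ _ (fun v hv => ?_)
            have hd0 : (0:ℝ) ≤ (outDeg T v : ℝ) := Nat.cast_nonneg _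
            have hdN : (outDeg T v : ℝ) ≤ (T.n:ℝ) := by exact_mod_cast outDeg_le T v
            nlinarith
        _ = ((univ.filter (fun v => ¬ p v)).card : ℝ) * (T.n:ℝ)^2 := by rw [nsmul_eq_mul]
        _ ≤ (δ*(T.n:ℝ)) * (T.n:ℝ)^2 := mul_le_mul_of_nonneg_right h (by positivity)
    nlinarith [hsplit, hgood, hbad]

open Finset in
lemma bad_le_of_eT (T : Tournament) {ε : ℝ} (hε : 0 < ε) (he : eT T ≤ ε^3) :
    (Nat.card {v : Fin T.n // ¬((1/2 - ε) * ((T.n) : ℝ) ≤ (outDeg T v : ℝ) ∧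
        (outDeg T v : ℝ) ≤ (1/2 + ε) * ((T.n) : ℝ))} : ℝ) ≤ ε * ((T.n) : ℝ) := by
  classical
  rw [nat_card_filter]
  rcases Nat.eq_zero_or_pos T.n with h0 | h0
  · have : ((univ : Finset (Fin T.n)).card) = 0 := by simp [h0]
    have hle := Finset.card_filter_le (univ : Finset (Fin T.n))
      (fun v => ¬((1/2 - ε) * ((T.n) : ℝ) ≤ (outDeg T v : ℝ) ∧
        (outDeg T v : ℝ) ≤ (1/2 + ε) * ((T.n) : ℝ)))
    rw [this] at hle
    simp only [Nat.le_zero] at hle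
    rw [hle]
    simp only [Nat.cast_zero]
    positivity
  · have hN : (0:ℝ) < (T.n : ℝ) := by exact_mod_cast h0
    set B := univ.filter (fun v => ¬((1/2 - ε) * ((T.n) : ℝ) ≤ (outDeg T v : ℝ) ∧
        (outDeg T v : ℝ) ≤ (1/2 + ε) * ((T.n) : ℝ))) with hB
    have key : ∀ v ∈ B, (ε*(T.n:ℝ))^2 ≤ ((outDeg T v : ℝ) - (T.n:ℝ)/2)^2 := by
      intro v hv
      rw [hB, Finset.mem_filter] at hv
      have h2 := hv.2
      rw [not_and_or] at h2
      rcases h2 with h2 | h2 <;> push_neg at h2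
      · have h3 : ε * (T.n:ℝ) ≤ (T.n:ℝ)/2 - (outDeg T v : ℝ) := by nlinarith
        have h4 := sq_le_sq' (by nlinarith : -((T.n:ℝ)/2 - (outDeg T v : ℝ)) ≤ ε * (T.n:ℝ)) h3
        nlinarith [h4]
      · have h3 : ε * (T.n:ℝ) ≤ (outDeg T v : ℝ) - (T.n:ℝ)/2 := by nlinarith
        exact sq_le_sq' (by nlinarith) h3
    have hsum : (B.card : ℝ) * (ε*(T.n:ℝ))^2 ≤ ∑ v ∈ B, ((outDeg T v : ℝ) - (T.n:ℝ)/2)^2 := by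
      have := Finset.card_nsmul_le_sum B (fun v => ((outDeg T v : ℝ) - (T.n:ℝ)/2)^2)
        ((ε*(T.n:ℝ))^2) key
      simpa [nsmul_eq_mul] using this
    have hS : ∑ v ∈ B, ((outDeg T v : ℝ) - (T.n:ℝ)/2)^2
        ≤ ∑ v, ((outDeg T v : ℝ) - (T.n:ℝ)/2)^2 :=
      Finset.sum_le_sum_of_subset_of_nonneg (Finset.subset_univ _)
        (fun v _ _ => sq_nonneg _)
    have hSe : ∑ v, ((outDeg T v : ℝ) - (T.n:ℝ)/2)^2 = eT T * (T.n:ℝ)^3 := by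
      rw [eT, div_mul_cancel₀ _ (pow_pos hN 3).ne']
    have hfin : (B.card : ℝ) * (ε*(T.n:ℝ))^2 ≤ (ε*(T.n:ℝ)) * (ε*(T.n:ℝ))^2 := by
      have h1 : eT T * (T.n:ℝ)^3 ≤ ε^3 * (T.n:ℝ)^3 :=
        mul_le_mul_of_nonneg_right he (by positivity)
      nlinarith [hsum, hS, hSe]
    exact le_of_mul_le_mul_right hfin (by positivity)
lemma tendsto_inv_parts (T : ℕ → Tournament) (hT : Tendsto (fun n => (T n).n) atTop atTop) :
    Tendsto (fun n => -(1/(2*((T n).n:ℝ))) + 1/(4*((T n).n:ℝ)^2)) atTop (𝓝 0) := by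
  have hN : Tendsto (fun n => ((T n).n : ℝ)) atTop atTop :=
    tendsto_natCast_atTop_atTop.comp hT
  have h1 : Tendsto (fun n => (2*((T n).n:ℝ))⁻¹) atTop (𝓝 0) :=
    (hN.const_mul_atTop (by norm_num : (0:ℝ) < 2)).inv_tendsto_atTop
  have hsq : Tendsto (fun n => ((T n).n:ℝ) * ((T n).n:ℝ)) atTop atTop :=
    hN.atTop_mul_atTop₀ hN
  have h2 : Tendsto (fun n => (4*(((T n).n:ℝ) * ((T n).n:ℝ)))⁻¹) atTop (𝓝 0) :=
    (hsq.const_mul_atTop (by norm_num : (0:ℝ) < 4)).inv_tendsto_atTop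
  have h3 := h1.neg.add h2
  rw [neg_zero, add_zero] at h3
  apply h3.congr
  intro n
  rw [one_div, one_div, pow_two]

lemma htail (T : ℕ → Tournament) (hT : Tendsto (fun n => (T n).n) atTop atTop) :
    Tendsto (fun n => homDensity TT3 (T n) - (eT (T n)/2 + 1/8)) atTop (𝓝 0) := by
  apply (tendsto_inv_parts T hT).congr'
  filter_upwards [hT.eventually_ge_atTop 1] with n hn
  rw [density_eq (T n) (by omega : 0 < (T n).n)]
  ring

lemma iff_t_e (T : ℕ → Tournament) (hT : Tendsto (fun n => (T n).n) atTop atTop) :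
    Tendsto (fun n => homDensity TT3 (T n)) atTop (𝓝 (1/8)) ↔
      Tendsto (fun n => eT (T n)) atTop (𝓝 0) := by
  have htl := htail T hT
  constructor
  · intro h
    have h2 := (h.sub htl).sub_const (1/8)
    have heq : (fun n => homDensity TT3 (T n)
        - (homDensity TT3 (T n) - (eT (T n)/2 + 1/8)) - 1/8) = fun n => eT (T n)/2 := by
      funext n; ring
    rw [heq, show ((1:ℝ)/8 - 0 - 1/8) = 0 by norm_num] at h2
    have h4 := h2.const_mul 2
    rw [mul_zero] at h4
    apply h4.congr
    intro n; ring
  · intro h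
    have h3 := htl.add ((h.div_const 2).add_const (1/8))
    have heq : (fun n => (homDensity TT3 (T n) - (eT (T n)/2 + 1/8)) + (eT (T n)/2 + 1/8))
        = fun n => homDensity TT3 (T n) := by funext n; ring
    rw [heq, show ((0:ℝ) + (0/2 + 1/8)) = 1/8 by norm_num] at h3
    exact h3

lemma NR_iff_e (T : ℕ → Tournament) :
    NearlyRegular T ↔ Tendsto (fun n => eT (T n)) atTop (𝓝 0) := by
  constructor
  · intro hNR
    rw [Metric.tendsto_atTop]
    intro ε hε
    have hδ : 0 < min (ε/3) 1 := lt_min (by linarith) one_pos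
    obtain ⟨n₀, hn₀⟩ := hNR (min (ε/3) 1) hδ
    refine ⟨n₀, fun n hn => ?_⟩
    have hb := eT_le_of_bad (T n) hδ (hn₀ n hn)
    have h0 := eT_nonneg (T n)
    rw [Real.dist_eq, sub_zero, abs_of_nonneg h0]
    have hm1 : min (ε/3) 1 ≤ ε/3 := min_le_left _ _
    have hm2 : min (ε/3) 1 ≤ 1 := min_le_right _ _
    nlinarith
  · intro h ε hε
    obtain ⟨n₀, hn₀⟩ := (Metric.tendsto_atTop.mp h) (ε^3) (by positivity)
    refine ⟨n₀, fun n hn => ?_⟩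
    have hd := hn₀ n hn
    rw [Real.dist_eq, sub_zero, abs_of_nonneg (eT_nonneg _)] at hd
    exact bad_le_of_eT (T n) hε hd.le

lemma liminf_ge (T : ℕ → Tournament) (hT : Tendsto (fun n => (T n).n) atTop atTop) :
    1/8 ≤ Filter.liminf (fun n => homDensity TT3 (T n)) atTop := by
  have hr := tendsto_inv_parts T hT
  have hg : Tendsto (fun n => 1/8 + (-(1/(2*((T n).n:ℝ))) + 1/(4*((T n).n:ℝ)^2)))
      atTop (𝓝 (1/8)) := by
    have := (tendsto_const_nhds (x := (1/8:ℝ)) (f := atTop)).add hr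
    rwa [add_zero] at this
  have hle : ∀ᶠ n in atTop,
      (1/8 + (-(1/(2*((T n).n:ℝ))) + 1/(4*((T n).n:ℝ)^2))) ≤ homDensity TT3 (T n) := by
    filter_upwards [hT.eventually_ge_atTop 1] with n hn
    rw [density_eq (T n) (by omega : 0 < (T n).n)]
    have := eT_nonneg (T n)
    linarith
  have hcb : Filter.IsCoboundedUnder (· ≥ ·) atTop (fun n => homDensity TT3 (T n)) := by
    apply Filter.IsBoundedUnder.isCoboundedUnder_ge
    exact Filter.isBoundedUnder_of ⟨1, fun n => homDensity_le_one _ _⟩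
  have h1 := Filter.liminf_le_liminf hle hg.isBoundedUnder_ge hcb
  rwa [hg.liminf_eq] at h1

/-- For every sequence of tournaments with `v(Tₙ) → ∞`, `liminf t(TT₃,Tₙ) ≥ 1/8`;
moreover the sequence is nearly regular iff `t(TT₃,Tₙ) → 1/8`. -/
theorem statement_7 (T : ℕ → Tournament)
    (hT : Tendsto (fun n => (T n).n) atTop atTop) :
    1/8 ≤ Filter.liminf (fun n => homDensity TT3 (T n)) atTop ∧
      (NearlyRegular T ↔
        Tendsto (fun n => homDensity TT3 (T n)) atTop (𝓝 (1/8))) := by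
  exact ⟨liminf_ge T hT, (NR_iff_e T).trans (iff_t_e T hT).symm⟩
end

section
/- Every sequence (T_n)_{n∈ℕ} of tournaments with v(T_n) → ∞ satisfies limsup_{n→∞} t(C₃, T_n) ≤ 1/8; moreover, such a sequence is nearly regular if and only if lim_{n→∞} t(C₃, T_n) = 1/8. -/
open MeasureTheory Filter Topology

namespace Aux

def wt (T : Tournament) (a b : Fin T.n) : ℤ := if T.arc a b then 1 else 0

lemma wt_self (T : Tournament) (a : Fin T.n) : wt T a a = 0 := by
  simp [wt, T.irrefl a]

lemma wt_pair (T : Tournament) (a b : Fin T.n) :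
    wt T a b + wt T b a = if a = b then 0 else 1 := by
  by_cases h : a = b
  · subst h; simp [wt_self]
  · have := T.total a b h
    simp only [wt, this, if_neg h]
    cases T.arc b a <;> simp

lemma wt_rev (T : Tournament) (a b : Fin T.n) (h : a ≠ b) :
    wt T b a = 1 - wt T a b := by
  have := wt_pair T a b
  rw [if_neg h] at this
  linarith

lemma wt_sq (T : Tournament) (a b : Fin T.n) : wt T a b ^ 2 = wt T a b := by
  simp only [wt]; split <;> ring

def dd (T : Tournament) (a : Fin T.n) : ℤ := ∑ b : Fin T.n, wt T a b

lemma dd_eq_outDeg (T : Tournament) (a : Fin T.n) : dd T a = (outDeg T a : ℤ) := by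
  classical
  rw [outDeg, Nat.card_eq_fintype_card, Fintype.card_subtype, dd]
  rw [← Finset.sum_boole]
  rfl

lemma hom_eq_sum (T : Tournament) :
    (homCount C3 T : ℤ) =
      ∑ a : Fin T.n, ∑ b : Fin T.n, ∑ c : Fin T.n, wt T a b * wt T b c * wt T c a := by
  classical
  have e : {f : Fin C3.n → Fin T.n // ∀ i j, C3.arc i j → T.arc (f i) (f j)} ≃
      {p : Fin T.n × Fin T.n × Fin T.n //
        T.arc p.1 p.2.1 ∧ T.arc p.2.1 p.2.2 ∧ T.arc p.2.2 p.1} := by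
    refine ⟨fun f => ⟨(f.1 ⟨0, by decide⟩, f.1 ⟨1, by decide⟩, f.1 ⟨2, by decide⟩), ?_⟩,
      fun p => ⟨![p.1.1, p.1.2.1, p.1.2.2], ?_⟩, ?_, ?_⟩
    · exact ⟨f.2 ⟨0, by decide⟩ ⟨1, by decide⟩ (by decide),
        f.2 ⟨1, by decide⟩ ⟨2, by decide⟩ (by decide),
        f.2 ⟨2, by decide⟩ ⟨0, by decide⟩ (by decide)⟩
    · intro i j hij
      fin_cases i <;> fin_cases j <;> first
        | exact absurd hij (by decide)
        | exact p.2.1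
        | exact p.2.2.1
        | exact p.2.2.2
    · intro f
      ext i
      fin_cases i <;> rfl
    · intro p; rfl
  rw [homCount, Nat.card_congr e, Nat.card_eq_fintype_card, Fintype.card_subtype]
  rw [Finset.card_filter]
  push_cast
  rw [Fintype.sum_prod_type]
  refine Finset.sum_congr rfl fun a _ => ?_
  rw [Fintype.sum_prod_type]
  refine Finset.sum_congr rfl fun b _ => ?_
  refine Finset.sum_congr rfl fun c _ => ?_
  simp only [wt]
  by_cases h1 : T.arc a b <;> by_cases h2 : T.arc b c <;> by_cases h3 : T.arc c a <;>
    simp [h1, h2, h3]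


def delta {n : ℕ} (a b : Fin n) : ℤ := if a = b then 1 else 0

variable (T : Tournament)

lemma ptwise (a b c : Fin T.n) :
    wt T a b * wt T b c * wt T c a + wt T b a * wt T c b * wt T a c
      + wt T a b * wt T a c + wt T b a * wt T b c + wt T c a * wt T c b
    = (1 - delta a b) * (1 - delta b c) * (1 - delta c a)
      + delta a b * wt T c a + delta b c * wt T a b + delta a c * wt T b a := by
  by_cases hab : a = b
  · subst hab
    by_cases hac : a = c
    · subst hac; simp [wt_self, delta]
    · simp [wt_self, delta, hac, Ne.symm hac]
      ring_nf
      simp [wt_sq]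
  · by_cases hbc : b = c
    · subst hbc
      simp [wt_self, delta, hab, Ne.symm hab]
      ring_nf
      simp [wt_sq]
    · by_cases hac : a = c
      · subst hac
        simp [wt_self, delta, hab, Ne.symm hab, hbc, Ne.symm hbc]
        ring_nf
        simp [wt_sq]
      · rw [wt_rev T a b hab, wt_rev T b c hbc, wt_rev T c a (Ne.symm hac)]
        simp [delta, hab, hbc, hac, Ne.symm hac]
        ring

lemma sum_delta_right (a : Fin T.n) : ∑ b : Fin T.n, delta a b = 1 := by
  simp [delta, Finset.sum_ite_eq]

lemma sum_delta_left (a : Fin T.n) : ∑ b : Fin T.n, delta b a = 1 := by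
  simp [delta, Finset.sum_ite_eq']

lemma sum_mmm :
    ∑ a : Fin T.n, ∑ b : Fin T.n, ∑ c : Fin T.n,
      (1 - delta a b) * (1 - delta b c) * (1 - delta c a)
    = (T.n:ℤ)^3 - 3*(T.n:ℤ)^2 + 2*(T.n:ℤ) := by
  have inner : ∀ a b : Fin T.n,
      ∑ c : Fin T.n, (1 - delta b c) * (1 - delta c a) = (T.n:ℤ) - 2 + delta a b := by
    intro a b
    have expand : ∀ c : Fin T.n, (1 - delta b c) * (1 - delta c a)
        = 1 - delta b c - delta c a + delta b c * delta c a := by intro c; ring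
    simp only [expand]
    have h1 : ∑ c : Fin T.n, delta b c * delta c a = delta b a := by
      simp only [delta]
      rw [Finset.sum_eq_single b]
      · simp
      · intro c _ hc; simp [Ne.symm hc]
      · simp
    rw [Finset.sum_add_distrib, Finset.sum_sub_distrib, Finset.sum_sub_distrib,
      Finset.sum_const, sum_delta_right, sum_delta_left, h1]
    have : delta b a = delta a b := by simp [delta, eq_comm]
    rw [this]; simp [Finset.card_univ]; ring
  have inner2 : ∀ a : Fin T.n,
      ∑ b : Fin T.n, (1 - delta a b) * ((T.n:ℤ) - 2 + delta a b)
        = ((T.n:ℤ) - 1) * ((T.n:ℤ) - 2) := by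
    intro a
    have expand : ∀ b : Fin T.n, (1 - delta a b) * ((T.n:ℤ) - 2 + delta a b)
        = ((T.n:ℤ) - 2) + (3 - (T.n:ℤ)) * delta a b - delta a b * delta a b := by
      intro b; ring
    simp only [expand]
    have hsq : ∀ b : Fin T.n, delta a b * delta a b = delta a b := by
      intro b; simp only [delta]; split <;> ring
    simp only [hsq]
    rw [Finset.sum_sub_distrib, Finset.sum_add_distrib, Finset.sum_const,
      ← Finset.mul_sum, sum_delta_right]
    simp [Finset.card_univ]; ring
  calc ∑ a : Fin T.n, ∑ b : Fin T.n, ∑ c : Fin T.n,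
        (1 - delta a b) * (1 - delta b c) * (1 - delta c a)
      = ∑ a : Fin T.n, ∑ b : Fin T.n, (1 - delta a b) * ((T.n:ℤ) - 2 + delta a b) := by
        refine Finset.sum_congr rfl fun a _ => Finset.sum_congr rfl fun b _ => ?_
        rw [← inner a b, Finset.mul_sum]
        refine Finset.sum_congr rfl fun c _ => ?_; ring
    _ = ∑ a : Fin T.n, ((T.n:ℤ) - 1) * ((T.n:ℤ) - 2) := by
        exact Finset.sum_congr rfl fun a _ => inner2 a
    _ = (T.n:ℤ)^3 - 3*(T.n:ℤ)^2 + 2*(T.n:ℤ) := by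
        rw [Finset.sum_const]; simp [Finset.card_univ]; ring

lemma A2_eq :
    ∑ a : Fin T.n, ∑ b : Fin T.n, ∑ c : Fin T.n, wt T b a * wt T c b * wt T a c
      = ∑ a : Fin T.n, ∑ b : Fin T.n, ∑ c : Fin T.n, wt T a b * wt T b c * wt T c a := by
  refine Finset.sum_congr rfl fun a _ => ?_
  rw [Finset.sum_comm]
  refine Finset.sum_congr rfl fun b _ => Finset.sum_congr rfl fun c _ => ?_
  ring

lemma A3_eq :
    ∑ a : Fin T.n, ∑ b : Fin T.n, ∑ c : Fin T.n, wt T a b * wt T a c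
      = ∑ a : Fin T.n, dd T a ^ 2 := by
  refine Finset.sum_congr rfl fun a _ => ?_
  rw [dd, sq, Finset.sum_mul_sum]

lemma A4_eq :
    ∑ a : Fin T.n, ∑ b : Fin T.n, ∑ c : Fin T.n, wt T b a * wt T b c
      = ∑ b : Fin T.n, dd T b ^ 2 := by
  rw [Finset.sum_comm]
  refine Finset.sum_congr rfl fun b _ => ?_
  rw [dd, sq, Finset.sum_mul_sum]

lemma A5_eq :
    ∑ a : Fin T.n, ∑ b : Fin T.n, ∑ c : Fin T.n, wt T c a * wt T c b
      = ∑ c : Fin T.n, dd T c ^ 2 := by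
  have h1 : ∑ a : Fin T.n, ∑ b : Fin T.n, ∑ c : Fin T.n, wt T c a * wt T c b
      = ∑ a : Fin T.n, ∑ c : Fin T.n, ∑ b : Fin T.n, wt T c a * wt T c b :=
    Finset.sum_congr rfl fun a _ => Finset.sum_comm
  rw [h1, Finset.sum_comm]
  refine Finset.sum_congr rfl fun c _ => ?_
  rw [dd, sq, Finset.sum_mul_sum]

def Dtot (T : Tournament) : ℤ := ∑ a : Fin T.n, ∑ b : Fin T.n, wt T a b

lemma S2_eq :
    ∑ a : Fin T.n, ∑ b : Fin T.n, ∑ c : Fin T.n, delta a b * wt T c a = Dtot T := by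
  have h1 : ∀ a : Fin T.n, ∑ b : Fin T.n, ∑ c : Fin T.n, delta a b * wt T c a
      = ∑ c : Fin T.n, wt T c a := by
    intro a
    rw [Finset.sum_comm]
    refine (Finset.sum_congr rfl fun c _ => ?_)
    rw [← Finset.sum_mul, sum_delta_right, one_mul]
  simp only [h1]
  rw [Dtot, Finset.sum_comm]

lemma S3_eq :
    ∑ a : Fin T.n, ∑ b : Fin T.n, ∑ c : Fin T.n, delta b c * wt T a b = Dtot T := by
  refine Finset.sum_congr rfl fun a _ => Finset.sum_congr rfl fun b _ => ?_
  rw [← Finset.sum_mul, sum_delta_right, one_mul]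

lemma S4_eq :
    ∑ a : Fin T.n, ∑ b : Fin T.n, ∑ c : Fin T.n, delta a c * wt T b a = Dtot T := by
  have h1 : ∀ a b : Fin T.n, ∑ c : Fin T.n, delta a c * wt T b a = wt T b a := by
    intro a b
    rw [← Finset.sum_mul, sum_delta_right, one_mul]
  simp only [h1]
  rw [Dtot, Finset.sum_comm]

lemma Dtot_val : 2 * Dtot T = (T.n:ℤ)^2 - T.n := by
  have h1 : Dtot T + Dtot T = ∑ a : Fin T.n, ∑ b : Fin T.n, (wt T a b + wt T b a) := by
    have hsplit : ∑ a : Fin T.n, ∑ b : Fin T.n, (wt T a b + wt T b a)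
        = (∑ a : Fin T.n, ∑ b : Fin T.n, wt T a b)
          + ∑ a : Fin T.n, ∑ b : Fin T.n, wt T b a := by
      simp only [Finset.sum_add_distrib]
    rw [hsplit]
    congr 1
    rw [Dtot, Finset.sum_comm]
  have h2 : ∑ a : Fin T.n, ∑ b : Fin T.n, (wt T a b + wt T b a)
      = ∑ a : Fin T.n, ∑ b : Fin T.n, (1 - delta a b) := by
    refine Finset.sum_congr rfl fun a _ => Finset.sum_congr rfl fun b _ => ?_
    rw [wt_pair]
    simp only [delta]
    split <;> simp
  have h3 : ∑ a : Fin T.n, ∑ b : Fin T.n, (1 - delta a b) = (T.n:ℤ)^2 - T.n := by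
    simp only [Finset.sum_sub_distrib, Finset.sum_const, sum_delta_right]
    simp [Finset.card_univ]
    ring
  linarith [h2 ▸ h1, h3]

lemma master :
    2 * (∑ a : Fin T.n, ∑ b : Fin T.n, ∑ c : Fin T.n, wt T a b * wt T b c * wt T c a)
      + 3 * (∑ a : Fin T.n, dd T a ^ 2)
    = ((T.n:ℤ)^3 - 3*(T.n:ℤ)^2 + 2*(T.n:ℤ)) + 3 * Dtot T := by
  have hsum : ∑ a : Fin T.n, ∑ b : Fin T.n, ∑ c : Fin T.n,
      (wt T a b * wt T b c * wt T c a + wt T b a * wt T c b * wt T a c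
        + wt T a b * wt T a c + wt T b a * wt T b c + wt T c a * wt T c b)
    = ∑ a : Fin T.n, ∑ b : Fin T.n, ∑ c : Fin T.n,
      ((1 - delta a b) * (1 - delta b c) * (1 - delta c a)
        + delta a b * wt T c a + delta b c * wt T a b + delta a c * wt T b a) :=
    Finset.sum_congr rfl fun a _ => Finset.sum_congr rfl fun b _ =>
      Finset.sum_congr rfl fun c _ => ptwise T a b c
  simp only [Finset.sum_add_distrib] at hsum
  rw [A2_eq, A3_eq, A4_eq, A5_eq, S2_eq, S3_eq, S4_eq, sum_mmm] at hsum
  linarith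

theorem key :
    8 * (∑ a : Fin T.n, ∑ b : Fin T.n, ∑ c : Fin T.n, wt T a b * wt T b c * wt T c a)
    = (T.n:ℤ)^3 - T.n - 3 * ∑ a : Fin T.n, (2 * (outDeg T a : ℤ) - ((T.n:ℤ) - 1))^2 := by
  have h1 := master T
  have h2 := Dtot_val T
  have hR : ∑ a : Fin T.n, (2 * (outDeg T a : ℤ) - ((T.n:ℤ) - 1))^2
      = 4 * (∑ a : Fin T.n, dd T a ^ 2) - 4*((T.n:ℤ)-1) * Dtot T
        + (T.n:ℤ) * ((T.n:ℤ)-1)^2 := by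
    have e : ∀ a : Fin T.n, (2 * (outDeg T a : ℤ) - ((T.n:ℤ) - 1))^2
        = 4 * dd T a ^ 2 - 4*((T.n:ℤ)-1) * dd T a + ((T.n:ℤ)-1)^2 := by
      intro a
      rw [← dd_eq_outDeg]
      ring
    simp only [e]
    rw [Finset.sum_add_distrib, Finset.sum_sub_distrib, ← Finset.mul_sum,
      ← Finset.mul_sum, Finset.sum_const]
    have hd : ∑ a : Fin T.n, dd T a = Dtot T := rfl
    rw [hd]
    simp only [Finset.card_univ, Fintype.card_fin, nsmul_eq_mul]
  linear_combination 4*h1 + 3*hR + (12 - 6*(T.n:ℤ))*h2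


theorem key8 (T : Tournament) :
    8 * (homCount C3 T : ℤ)
      = (T.n:ℤ)^3 - T.n - 3 * ∑ a : Fin T.n, (2 * (outDeg T a : ℤ) - ((T.n:ℤ) - 1))^2 := by
  rw [hom_eq_sum]; exact key T

theorem key8R (T : Tournament) :
    8 * (homCount C3 T : ℝ)
      = (T.n:ℝ)^3 - T.n - 3 * ∑ a : Fin T.n, (2 * (outDeg T a : ℝ) - ((T.n:ℝ) - 1))^2 := by
  exact_mod_cast key8 T

lemma density_eq (T : Tournament) (h : 0 < T.n) :
    homDensity C3 T = 1/8 - (1/8) * (((T.n:ℝ)^2)⁻¹)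
      - (3/8) * ((∑ a : Fin T.n, (2*(outDeg T a : ℝ) - ((T.n:ℝ)-1))^2) / (T.n:ℝ)^3) := by
  have hN : (0:ℝ) < (T.n:ℝ) := by exact_mod_cast h
  have hk := key8R T
  have hhom : (homCount C3 T : ℝ)
      = ((T.n:ℝ)^3 - T.n - 3 * ∑ a : Fin T.n, (2*(outDeg T a : ℝ) - ((T.n:ℝ)-1))^2)/8 := by
    linarith
  have hC3 : C3.n = 3 := rfl
  rw [homDensity, hC3, hhom]
  field_simp

lemma outDeg_le (T : Tournament) (v : Fin T.n) : (outDeg T v : ℝ) ≤ T.n := by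
  have : outDeg T v ≤ T.n := by
    classical
    rw [outDeg, Nat.card_eq_fintype_card]
    simpa using Fintype.card_subtype_le (fun j : Fin T.n => T.arc v j = true)
  exact_mod_cast this

lemma card_filter_eq {m : ℕ} (p : Fin m → Prop) [DecidablePred p] :
    (Finset.univ.filter p).card = Nat.card {v // p v} := by
  rw [Nat.card_eq_fintype_card, Fintype.card_subtype]

lemma Rupper (T : Tournament) (ε : ℝ) (hε : 0 < ε)
    (hcard : (Nat.card {v : Fin T.n //
        ¬((1/2 - ε) * (T.n : ℝ) ≤ (outDeg T v : ℝ) ∧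
          (outDeg T v : ℝ) ≤ (1/2 + ε) * (T.n : ℝ))} : ℝ) ≤ ε * T.n) :
    ∑ a : Fin T.n, (2*(outDeg T a:ℝ) - ((T.n:ℝ)-1))^2
      ≤ (T.n:ℝ) * (2*ε*(T.n:ℝ)+1)^2 + ε * (T.n:ℝ) * (4*(T.n:ℝ)^2) := by
  classical
  set P : Fin T.n → Prop := fun v => (1/2 - ε) * (T.n:ℝ) ≤ (outDeg T v:ℝ) ∧
    (outDeg T v:ℝ) ≤ (1/2 + ε) * (T.n:ℝ) with hP
  rw [← Finset.sum_filter_add_sum_filter_not Finset.univ P]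
  have hNnn : (0:ℝ) ≤ (T.n:ℝ) := Nat.cast_nonneg _
  refine add_le_add ?_ ?_
  · calc ∑ a ∈ Finset.univ.filter P, (2*(outDeg T a:ℝ) - ((T.n:ℝ)-1))^2
        ≤ (Finset.univ.filter P).card • ((2*ε*(T.n:ℝ)+1)^2) := by
          apply Finset.sum_le_card_nsmul
          intro v hv
          have hPv : P v := (Finset.mem_filter.mp hv).2
          obtain ⟨h1, h2⟩ := hPv
          apply sq_le_sq'
          · nlinarith
          · nlinarith
      _ ≤ (T.n:ℝ) * (2*ε*(T.n:ℝ)+1)^2 := by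
          rw [nsmul_eq_mul]
          apply mul_le_mul_of_nonneg_right _ (sq_nonneg _)
          have : (Finset.univ.filter P).card ≤ T.n := by
            simpa using Finset.card_filter_le Finset.univ P
          exact_mod_cast this
  · calc ∑ a ∈ Finset.univ.filter (fun v => ¬ P v), (2*(outDeg T a:ℝ) - ((T.n:ℝ)-1))^2
        ≤ (Finset.univ.filter (fun v => ¬ P v)).card • (4*(T.n:ℝ)^2) := by
          apply Finset.sum_le_card_nsmul
          intro v hv
          have hd0 : (0:ℝ) ≤ (outDeg T v : ℝ) := Nat.cast_nonneg _
          have hd1 : (outDeg T v : ℝ) ≤ T.n := outDeg_le T v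
          have hN1 : (1:ℝ) ≤ (T.n:ℝ) := by exact_mod_cast v.pos
          have h4 : (4:ℝ)*(T.n:ℝ)^2 = (2*(T.n:ℝ))^2 := by ring
          rw [h4]
          apply sq_le_sq'
          · nlinarith
          · nlinarith
      _ ≤ ε * (T.n:ℝ) * (4*(T.n:ℝ)^2) := by
          rw [nsmul_eq_mul]
          apply mul_le_mul_of_nonneg_right _ (by positivity)
          calc ((Finset.univ.filter (fun v => ¬ P v)).card : ℝ)
              = (Nat.card {v // ¬ P v} : ℝ) := by rw [card_filter_eq (fun v => ¬ P v)]
            _ ≤ ε * T.n := hcard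

lemma Rlower (T : Tournament) (ε : ℝ) (hε : 0 < ε) (hεN : 1 ≤ ε * T.n)
    (hcard : ε * T.n < (Nat.card {v : Fin T.n //
        ¬((1/2 - ε) * (T.n : ℝ) ≤ (outDeg T v : ℝ) ∧
          (outDeg T v : ℝ) ≤ (1/2 + ε) * (T.n : ℝ))} : ℝ)) :
    ε^3 * (T.n:ℝ)^3 < ∑ a : Fin T.n, (2*(outDeg T a:ℝ) - ((T.n:ℝ)-1))^2 := by
  classical
  have hNpos : (0:ℝ) < (T.n:ℝ) := by nlinarith
  set P : Fin T.n → Prop := fun v => (1/2 - ε) * (T.n:ℝ) ≤ (outDeg T v:ℝ) ∧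
    (outDeg T v:ℝ) ≤ (1/2 + ε) * (T.n:ℝ) with hP
  have hterm : ∀ v ∈ Finset.univ.filter (fun v => ¬ P v),
      ε^2 * (T.n:ℝ)^2 ≤ (2*(outDeg T v:ℝ) - ((T.n:ℝ)-1))^2 := by
    intro v hv
    have hPv : ¬ P v := (Finset.mem_filter.mp hv).2
    rw [hP] at hPv
    rw [not_and_or] at hPv
    rcases hPv with h | h
    · rw [not_le] at h
      nlinarith
    · rw [not_le] at h
      nlinarith
  have hsub : (Finset.univ.filter (fun v => ¬ P v)).card • (ε^2 * (T.n:ℝ)^2)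
      ≤ ∑ a ∈ Finset.univ.filter (fun v => ¬ P v), (2*(outDeg T a:ℝ) - ((T.n:ℝ)-1))^2 :=
    Finset.card_nsmul_le_sum _ _ _ hterm
  have hmono : ∑ a ∈ Finset.univ.filter (fun v => ¬ P v), (2*(outDeg T a:ℝ) - ((T.n:ℝ)-1))^2
      ≤ ∑ a : Fin T.n, (2*(outDeg T a:ℝ) - ((T.n:ℝ)-1))^2 :=
    Finset.sum_le_sum_of_subset_of_nonneg (Finset.filter_subset _ _)
      (fun a _ _ => sq_nonneg _)
  have hcard' : ε * (T.n:ℝ) < ((Finset.univ.filter (fun v => ¬ P v)).card : ℝ) := by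
    rw [card_filter_eq (fun v => ¬ P v)]
    exact hcard
  rw [nsmul_eq_mul] at hsub
  have hpos : 0 < ε^2 * (T.n:ℝ)^2 := by positivity
  calc ε^3 * (T.n:ℝ)^3 = (ε * (T.n:ℝ)) * (ε^2 * (T.n:ℝ)^2) := by ring
    _ < ((Finset.univ.filter (fun v => ¬ P v)).card : ℝ) * (ε^2 * (T.n:ℝ)^2) :=
        mul_lt_mul_of_pos_right hcard' hpos
    _ ≤ ∑ a ∈ Finset.univ.filter (fun v => ¬ P v), (2*(outDeg T a:ℝ) - ((T.n:ℝ)-1))^2 := hsub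
    _ ≤ ∑ a : Fin T.n, (2*(outDeg T a:ℝ) - ((T.n:ℝ)-1))^2 := hmono

end Aux

/-- For every sequence of tournaments with `v(Tₙ) → ∞`, `limsup t(C₃,Tₙ) ≤ 1/8`;
moreover the sequence is nearly regular iff `t(C₃,Tₙ) → 1/8`. -/
theorem statement_8 (T : ℕ → Tournament)
    (hT : Tendsto (fun n => (T n).n) atTop atTop) :
    Filter.limsup (fun n => homDensity C3 (T n)) atTop ≤ 1/8 ∧
      (NearlyRegular T ↔
        Tendsto (fun n => homDensity C3 (T n)) atTop (𝓝 (1/8))) := by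
  have hdens0 : ∀ n : ℕ, 0 ≤ homDensity C3 (T n) := fun n =>
    div_nonneg (Nat.cast_nonneg _) (by positivity)
  have hR0 : ∀ n : ℕ, 0 ≤ ∑ a : Fin (T n).n,
      (2*(outDeg (T n) a:ℝ) - (((T n).n:ℝ)-1))^2 := fun n =>
    Finset.sum_nonneg fun a _ => sq_nonneg _
  have hub : ∀ n : ℕ, 0 < (T n).n → homDensity C3 (T n) ≤ 1/8 := by
    intro n h
    rw [Aux.density_eq (T n) h]
    have h1 : (0:ℝ) < ((T n).n:ℝ) := by exact_mod_cast h
    have h2 : 0 ≤ (∑ a : Fin (T n).n,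
        (2*(outDeg (T n) a:ℝ) - (((T n).n:ℝ)-1))^2) / ((T n).n:ℝ)^3 :=
      div_nonneg (hR0 n) (by positivity)
    have h3 : (0:ℝ) < (1/8) * ((((T n).n:ℝ))^2)⁻¹ := by positivity
    linarith
  refine ⟨?_, ?_, ?_⟩
  · apply Filter.limsup_le_of_le
    · exact Filter.isCoboundedUnder_le_of_eventually_le atTop
        (x := 0) (Filter.Eventually.of_forall hdens0)
    · filter_upwards [hT.eventually_ge_atTop 1] with n hn
      exact hub n hn
  · -- nearly regular implies tendsto
    intro hNR
    have hg : Tendsto (fun n => (∑ a : Fin (T n).n,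
        (2*(outDeg (T n) a:ℝ) - (((T n).n:ℝ)-1))^2) / ((T n).n:ℝ)^3) atTop (𝓝 0) := by
      rw [Metric.tendsto_atTop]
      intro δ hδ
      set ε : ℝ := min (δ/20) 1 with hεdef
      have hε : 0 < ε := lt_min (by linarith) one_pos
      have hε1 : ε ≤ 1 := min_le_right _ _
      have hεδ : ε ≤ δ/20 := min_le_left _ _
      obtain ⟨n₁, hn₁⟩ := hNR ε hε
      obtain ⟨n₂, hn₂⟩ := Filter.eventually_atTop.mp (hT.eventually_ge_atTop (⌈ε⁻¹⌉₊ + 1))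
      refine ⟨max n₁ n₂, fun n hn => ?_⟩
      have h1 := hn₁ n (le_trans (le_max_left _ _) hn)
      have h2 := hn₂ n (le_trans (le_max_right _ _) hn)
      have hN1 : (1:ℝ) ≤ ((T n).n:ℝ) := by
        have : 1 ≤ (T n).n := le_trans (Nat.le_add_left 1 _) h2
        exact_mod_cast this
      have hNε : ε⁻¹ ≤ ((T n).n:ℝ) := by
        calc ε⁻¹ ≤ (⌈ε⁻¹⌉₊ : ℝ) := Nat.le_ceil _
          _ ≤ ((T n).n : ℝ) := by exact_mod_cast le_trans (Nat.le_succ _) h2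
      have hεN : 1 ≤ ε * ((T n).n:ℝ) := by
        calc (1:ℝ) = ε * ε⁻¹ := (mul_inv_cancel₀ hε.ne').symm
          _ ≤ ε * ((T n).n:ℝ) := mul_le_mul_of_nonneg_left hNε hε.le
      have hNpos : (0:ℝ) < ((T n).n:ℝ) := by linarith
      have hup := Aux.Rupper (T n) ε hε h1
      have hS : (∑ a : Fin (T n).n, (2*(outDeg (T n) a:ℝ) - (((T n).n:ℝ)-1))^2)
          ≤ 13 * ε * ((T n).n:ℝ)^3 := by
        refine le_trans hup ?_
        nlinarith [hεN, hN1, hε.le, hε1, sq_nonneg ((T n).n:ℝ), hNpos,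
          mul_le_mul_of_nonneg_right hε1 (by positivity : (0:ℝ) ≤ ε * ((T n).n:ℝ)^3),
          mul_le_mul_of_nonneg_left hN1 (by positivity : (0:ℝ) ≤ 4 * ε * ((T n).n:ℝ)^2),
          mul_le_mul_of_nonneg_left hεN (by positivity : (0:ℝ) ≤ ((T n).n:ℝ))]
      have hgn0 : 0 ≤ (∑ a : Fin (T n).n,
          (2*(outDeg (T n) a:ℝ) - (((T n).n:ℝ)-1))^2) / ((T n).n:ℝ)^3 :=
        div_nonneg (hR0 n) (by positivity)
      rw [dist_zero_right, Real.norm_eq_abs, abs_of_nonneg hgn0]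
      have hle : (∑ a : Fin (T n).n,
          (2*(outDeg (T n) a:ℝ) - (((T n).n:ℝ)-1))^2) / ((T n).n:ℝ)^3 ≤ 13 * ε := by
        rw [div_le_iff₀ (by positivity)]
        calc (∑ a : Fin (T n).n, (2*(outDeg (T n) a:ℝ) - (((T n).n:ℝ)-1))^2)
            ≤ 13 * ε * ((T n).n:ℝ)^3 := hS
          _ = 13 * ε * ((T n).n:ℝ)^3 := rfl
      linarith
    have hinv : Tendsto (fun n => ((((T n).n:ℝ))^2)⁻¹) atTop (𝓝 0) :=
      Filter.Tendsto.inv_tendsto_atTop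
        ((tendsto_pow_atTop two_ne_zero).comp (tendsto_natCast_atTop_atTop.comp hT))
    have hfinal : Tendsto (fun n => 1/8 - (1/8) * ((((T n).n:ℝ))^2)⁻¹
        - (3/8) * ((∑ a : Fin (T n).n,
            (2*(outDeg (T n) a:ℝ) - (((T n).n:ℝ)-1))^2) / ((T n).n:ℝ)^3))
        atTop (𝓝 (1/8 - (1/8)*0 - (3/8)*0)) :=
      (tendsto_const_nhds.sub (tendsto_const_nhds.mul hinv)).sub
        (tendsto_const_nhds.mul hg)
    have heq : (1:ℝ)/8 - (1/8)*0 - (3/8)*0 = 1/8 := by ring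
    rw [heq] at hfinal
    apply hfinal.congr'
    filter_upwards [hT.eventually_ge_atTop 1] with n hn
    exact (Aux.density_eq (T n) hn).symm
  · -- tendsto implies nearly regular
    intro htd
    by_contra hNR
    rw [NearlyRegular] at hNR
    push_neg at hNR
    obtain ⟨ε, hε, hbad⟩ := hNR
    have hc : (1:ℝ)/8 - 3*ε^3/8 < 1/8 := by nlinarith [pow_pos hε 3]
    have hev1 : ∀ᶠ n in atTop, 1/8 - 3*ε^3/8 < homDensity C3 (T n) :=
      htd.eventually_const_lt hc
    have hev2 : ∀ᶠ n in atTop, (⌈ε⁻¹⌉₊ + 1) ≤ (T n).n := hT.eventually_ge_atTop _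
    obtain ⟨n₀, hn₀⟩ := Filter.eventually_atTop.mp (hev1.and hev2)
    obtain ⟨n, hn, hcard⟩ := hbad n₀
    obtain ⟨hlt, hNn⟩ := hn₀ n hn
    have hN1 : (1:ℝ) ≤ ((T n).n:ℝ) := by
      have : 1 ≤ (T n).n := le_trans (Nat.le_add_left 1 _) hNn
      exact_mod_cast this
    have hNε : ε⁻¹ ≤ ((T n).n:ℝ) := by
      calc ε⁻¹ ≤ (⌈ε⁻¹⌉₊ : ℝ) := Nat.le_ceil _
        _ ≤ ((T n).n : ℝ) := by exact_mod_cast le_trans (Nat.le_succ _) hNn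
    have hεN : 1 ≤ ε * ((T n).n:ℝ) := by
      calc (1:ℝ) = ε * ε⁻¹ := (mul_inv_cancel₀ hε.ne').symm
        _ ≤ ε * ((T n).n:ℝ) := mul_le_mul_of_nonneg_left hNε hε.le
    have hNpos : (0:ℝ) < ((T n).n:ℝ) := by linarith
    have hcard2 : ε * ((T n).n:ℝ) < (Nat.card {v : Fin (T n).n //
        ¬((1/2 - ε) * ((T n).n : ℝ) ≤ (outDeg (T n) v : ℝ) ∧
          (outDeg (T n) v : ℝ) ≤ (1/2 + ε) * ((T n).n : ℝ))} : ℝ) := by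
      have hfix : Nat.card {v : Fin (T n).n //
          (1/2 - ε) * ((T n).n:ℝ) ≤ (outDeg (T n) v:ℝ) →
            (1/2 + ε) * ((T n).n:ℝ) < (outDeg (T n) v:ℝ)}
          = Nat.card {v : Fin (T n).n //
          ¬((1/2 - ε) * ((T n).n : ℝ) ≤ (outDeg (T n) v : ℝ) ∧
            (outDeg (T n) v : ℝ) ≤ (1/2 + ε) * ((T n).n : ℝ))} :=
        Nat.card_congr (Equiv.subtypeEquivRight (fun v => by
          constructor
          · intro h hand
            exact absurd (h hand.1) (not_lt.mpr hand.2)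
          · intro h hle
            by_contra hcon
            exact h ⟨hle, not_lt.mp hcon⟩))
      rw [← hfix]
      exact hcard
    have hlow := Aux.Rlower (T n) ε hε hεN hcard2
    have hpos : 0 < (T n).n := by exact_mod_cast hN1
    rw [Aux.density_eq (T n) hpos] at hlt
    have hdiv : ε^3 < (∑ a : Fin (T n).n,
        (2*(outDeg (T n) a:ℝ) - (((T n).n:ℝ)-1))^2) / ((T n).n:ℝ)^3 := by
      rw [lt_div_iff₀ (by positivity)]
      exact hlow
    have hinv0 : (0:ℝ) ≤ (1/8) * ((((T n).n:ℝ))^2)⁻¹ := by positivity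
    linarith
end

section
/- Let H be a tournament. If there exist α, β ∈ ℝ such that the formal linear combination α·TT₃ + β·H forces quasirandomness, then H forces quasirandomness in regular tournaments. Similarly, if there exist α, β ∈ ℝ such that α·C₃ + β·H forces quasirandomness, then H forces quasirandomness in regular tournaments. -/
open MeasureTheory Filter Topology

open Finset

section Counting

variable (T : Tournament)

/-- degree as a filter card -/
def degF (x : Fin T.n) : ℕ := (univ.filter (fun y => T.arc x y = true)).card

lemma outDeg_eq_degF (x : Fin T.n) : outDeg T x = degF T x := by
  rw [outDeg, Nat.card_eq_fintype_card, Fintype.card_subtype]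
  rfl

lemma degF_le (x : Fin T.n) : degF T x ≤ T.n := by
  simpa [degF] using (Finset.card_filter_le univ (fun y => T.arc x y = true))

lemma arc_cases (x y : Fin T.n) :
    (x = y ∧ T.arc x y = false ∧ T.arc y x = false) ∨
    (x ≠ y ∧ T.arc x y = true ∧ T.arc y x = false) ∨
    (x ≠ y ∧ T.arc x y = false ∧ T.arc y x = true) := by
  by_cases h : x = y
  · subst h; exact Or.inl ⟨rfl, T.irrefl x, T.irrefl x⟩
  · have ht := T.total x y h
    cases hyx : T.arc y x with
    | false => refine Or.inr (Or.inl ⟨h, ?_, rfl⟩); rw [ht, hyx]; rfl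
    | true => refine Or.inr (Or.inr ⟨h, ?_, rfl⟩); rw [ht, hyx]; rfl

lemma degF_as_sum (x : Fin T.n) :
    degF T x = ∑ y : Fin T.n, (if T.arc x y = true then 1 else 0) := by
  rw [degF, Finset.card_filter]

/-- (L1) `2 * Σ deg + n = n²`. -/
lemma sum_degF : 2 * (∑ x : Fin T.n, degF T x) + T.n = T.n * T.n := by
  have key : ∀ x y : Fin T.n,
      (if T.arc x y = true then 1 else 0) + (if T.arc y x = true then 1 else 0)
        + (if x = y then 1 else 0) = 1 := by
    intro x y
    rcases arc_cases T x y with ⟨h1,h2,h3⟩|⟨h1,h2,h3⟩|⟨h1,h2,h3⟩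
    · subst h1; simp [h2]
    · simp [h1, h2, h3]
    · simp [h1, h2, h3]
  have h2 : ∑ x : Fin T.n, ∑ y : Fin T.n,
      ((if T.arc x y = true then 1 else 0) + (if T.arc y x = true then 1 else 0)
        + (if x = y then 1 else 0)) = T.n * T.n := by
    simp only [key]
    simp [Finset.sum_const, mul_comm]
  simp only [Finset.sum_add_distrib] at h2
  have e1 : ∑ x : Fin T.n, ∑ y : Fin T.n, (if T.arc x y = true then 1 else 0)
      = ∑ x : Fin T.n, degF T x := by
    simp [degF_as_sum]
  have e2 : ∑ x : Fin T.n, ∑ y : Fin T.n, (if T.arc y x = true then 1 else 0)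
      = ∑ x : Fin T.n, degF T x := by
    rw [Finset.sum_comm]; simp [degF_as_sum]
  have e3 : ∑ x : Fin T.n, ∑ y : Fin T.n, (if x = y then 1 else 0) = T.n := by
    simp [Finset.sum_ite_eq]
  omega

end Counting
section HomTriples

variable (T : Tournament)

lemma natCard_subtype {k : ℕ} (p : Fin k → Prop) [DecidablePred p] :
    Nat.card {x // p x} = (univ.filter p).card := by
  rw [Nat.card_eq_fintype_card, Fintype.card_subtype]

lemma homCount_TT3_s10 :
    homCount TT3 T = (univ.filter (fun p : Fin T.n × Fin T.n × Fin T.n =>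
      T.arc p.1 p.2.1 = true ∧ T.arc p.1 p.2.2 = true ∧ T.arc p.2.1 p.2.2 = true)).card := by
  classical
  rw [homCount, ← Fintype.card_subtype, ← Nat.card_eq_fintype_card]
  refine Nat.card_congr ?_
  refine
    { toFun := fun f => ⟨(f.1 ⟨0, by decide⟩, f.1 ⟨1, by decide⟩, f.1 ⟨2, by decide⟩), ⟨f.2 ⟨0, by decide⟩ ⟨1, by decide⟩ (by decide), f.2 ⟨0, by decide⟩ ⟨2, by decide⟩ (by decide),
        f.2 ⟨1, by decide⟩ ⟨2, by decide⟩ (by decide)⟩⟩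
      invFun := fun p => ⟨![p.1.1, p.1.2.1, p.1.2.2], ?_⟩
      left_inv := ?_
      right_inv := ?_ }
  · intro i j hij
    fin_cases i <;> fin_cases j <;>
      first
        | exact absurd hij (by decide)
        | simpa using p.2.1
        | simpa using p.2.2.1
        | simpa using p.2.2.2
        | exact p.2.1
        | exact p.2.2.1
        | exact p.2.2.2
  · rintro ⟨f, hf⟩
    refine Subtype.ext (funext fun i => ?_)
    fin_cases i <;> rfl
  · rintro ⟨⟨x, y, z⟩, h⟩
    rfl

lemma homCount_C3 :
    homCount C3 T = (univ.filter (fun p : Fin T.n × Fin T.n × Fin T.n =>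
      T.arc p.1 p.2.1 = true ∧ T.arc p.2.1 p.2.2 = true ∧ T.arc p.2.2 p.1 = true)).card := by
  classical
  rw [homCount, ← Fintype.card_subtype, ← Nat.card_eq_fintype_card]
  refine Nat.card_congr ?_
  refine
    { toFun := fun f => ⟨(f.1 ⟨0, by decide⟩, f.1 ⟨1, by decide⟩, f.1 ⟨2, by decide⟩), ⟨f.2 ⟨0, by decide⟩ ⟨1, by decide⟩ (by decide), f.2 ⟨1, by decide⟩ ⟨2, by decide⟩ (by decide),
        f.2 ⟨2, by decide⟩ ⟨0, by decide⟩ (by decide)⟩⟩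
      invFun := fun p => ⟨![p.1.1, p.1.2.1, p.1.2.2], ?_⟩
      left_inv := ?_
      right_inv := ?_ }
  · intro i j hij
    fin_cases i <;> fin_cases j <;>
      first
        | exact absurd hij (by decide)
        | simpa using p.2.1
        | simpa using p.2.2.1
        | simpa using p.2.2.2
        | exact p.2.1
        | exact p.2.2.1
        | exact p.2.2.2
  · rintro ⟨f, hf⟩
    refine Subtype.ext (funext fun i => ?_)
    fin_cases i <;> rfl
  · rintro ⟨⟨x, y, z⟩, h⟩
    rfl

end HomTriples
section Identities

variable (T : Tournament)

lemma trip_card_eq_sum (P : Fin T.n × Fin T.n × Fin T.n → Prop) [DecidablePred P] :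
    (univ.filter P).card
      = ∑ x : Fin T.n, ∑ y : Fin T.n, ∑ z : Fin T.n, (if P (x, y, z) then 1 else 0) := by
  simp only [Finset.card_filter, Fintype.sum_prod_type]

/-- (L2): `2·hom(TT3) + Σ d = Σ d²`. -/
lemma L2 : 2 * homCount TT3 T + (∑ x : Fin T.n, degF T x)
    = ∑ x : Fin T.n, (degF T x) * (degF T x) := by
  classical
  have key : ∀ x y z : Fin T.n,
      (if T.arc x y = true then 1 else 0) * (if T.arc x z = true then 1 else 0)
        = (if (T.arc x y = true ∧ T.arc x z = true ∧ T.arc y z = true) then 1 else 0)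
          + (if (T.arc x z = true ∧ T.arc x y = true ∧ T.arc z y = true) then 1 else 0)
          + (if (T.arc x y = true ∧ y = z) then 1 else 0) := by
    intro x y z
    rcases arc_cases T y z with ⟨h1,h2,h3⟩|⟨h1,h2,h3⟩|⟨h1,h2,h3⟩
    · subst h1
      by_cases hxy : T.arc x y = true <;> simp [hxy, h2]
    · by_cases hxy : T.arc x y = true <;> by_cases hxz : T.arc x z = true <;>
        simp [hxy, hxz, h1, h2, h3]
    · by_cases hxy : T.arc x y = true <;> by_cases hxz : T.arc x z = true <;>
        simp [hxy, hxz, h1, h2, h3]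
  have hD2 : ∑ x : Fin T.n, (degF T x) * (degF T x)
      = ∑ x : Fin T.n, ∑ y : Fin T.n, ∑ z : Fin T.n, (if T.arc x y = true then 1 else 0) * (if T.arc x z = true then 1 else 0) := by
    refine Finset.sum_congr rfl fun x _ => ?_
    rw [degF_as_sum, Finset.sum_mul_sum]
  rw [hD2]
  simp only [key, Finset.sum_add_distrib]
  have e1 : (∑ x : Fin T.n, ∑ y : Fin T.n, ∑ z : Fin T.n,
        if (T.arc x y = true ∧ T.arc x z = true ∧ T.arc y z = true) then 1 else 0)
      = homCount TT3 T := by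
    rw [homCount_TT3_s10, trip_card_eq_sum]
  have e2 : (∑ x : Fin T.n, ∑ y : Fin T.n, ∑ z : Fin T.n,
        if (T.arc x z = true ∧ T.arc x y = true ∧ T.arc z y = true) then 1 else 0)
      = homCount TT3 T := by
    rw [homCount_TT3_s10, trip_card_eq_sum]
    refine Finset.sum_congr rfl fun x _ => ?_
    rw [Finset.sum_comm]
  have e3 : (∑ x : Fin T.n, ∑ y : Fin T.n, ∑ z : Fin T.n,
        if (T.arc x y = true ∧ y = z) then 1 else 0)
      = ∑ x : Fin T.n, degF T x := by
    refine Finset.sum_congr rfl fun x _ => ?_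
    rw [degF_as_sum]
    refine Finset.sum_congr rfl fun y _ => ?_
    by_cases hxy : T.arc x y = true <;> simp [hxy]
  omega

/-- (L3): `hom(C3) + hom(TT3) + Σ d² + Σ d = n · Σ d`. -/
lemma L3 : homCount C3 T + homCount TT3 T + (∑ x : Fin T.n, (degF T x) * (degF T x))
    + (∑ x : Fin T.n, degF T x) = T.n * (∑ x : Fin T.n, degF T x) := by
  classical
  have key : ∀ x y z : Fin T.n,
      (if T.arc x y = true then 1 else 0) * (if T.arc y z = true then 1 else 0)
        = (if (T.arc x y = true ∧ T.arc y z = true ∧ T.arc z x = true) then 1 else 0)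
          + (if (T.arc x y = true ∧ T.arc x z = true ∧ T.arc y z = true) then 1 else 0) := by
    intro x y z
    by_cases hxy : T.arc x y = true
    · by_cases hyz : T.arc y z = true
      · have hxz : x ≠ z := by
          rintro rfl
          rcases arc_cases T x y with ⟨h1,h2,h3⟩|⟨h1,h2,h3⟩|⟨h1,h2,h3⟩ <;> simp_all
        rcases arc_cases T x z with ⟨h1,h2,h3⟩|⟨h1,h2,h3⟩|⟨h1,h2,h3⟩
        · exact absurd h1 hxz
        · simp [hxy, hyz, h2, h3]
        · simp [hxy, hyz, h2, h3]
      · simp [hxy, hyz]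
    · simp [hxy]
  -- expand `n * S` as a triple sum
  have expand : T.n * (∑ y : Fin T.n, degF T y)
      = ∑ y : Fin T.n, ∑ x : Fin T.n,
          ((if T.arc x y = true then 1 else 0) + (if T.arc y x = true then 1 else 0) + (if x = y then 1 else 0)) * degF T y := by
    rw [Finset.mul_sum]
    refine Finset.sum_congr rfl fun y _ => ?_
    rw [← Finset.sum_mul]
    congr 1
    have : ∀ x : Fin T.n,
        (if T.arc x y = true then 1 else 0) + (if T.arc y x = true then 1 else 0) + (if x = y then 1 else 0) = 1 := by
      intro x
      rcases arc_cases T x y with ⟨h1,h2,h3⟩|⟨h1,h2,h3⟩|⟨h1,h2,h3⟩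
      · subst h1; simp [h2]
      · simp [h1, h2, h3]
      · simp [h1, h2, h3]
    simp [this]
  rw [expand]
  simp only [add_mul, Finset.sum_add_distrib]
  have e2 : ∑ y : Fin T.n, ∑ x : Fin T.n, (if T.arc y x = true then 1 else 0) * degF T y
      = ∑ x : Fin T.n, (degF T x) * (degF T x) := by
    refine Finset.sum_congr rfl fun y _ => ?_
    rw [← Finset.sum_mul, ← degF_as_sum]
  have e3 : ∑ y : Fin T.n, ∑ x : Fin T.n, (if x = y then 1 else 0) * degF T y
      = ∑ y : Fin T.n, degF T y := by
    refine Finset.sum_congr rfl fun y _ => ?_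
    rw [← Finset.sum_mul]
    simp
  have e1 : ∑ y : Fin T.n, ∑ x : Fin T.n, (if T.arc x y = true then 1 else 0) * degF T y
      = homCount C3 T + homCount TT3 T := by
    have : ∀ y x : Fin T.n, (if T.arc x y = true then 1 else 0) * degF T y
        = ∑ z : Fin T.n, (if T.arc x y = true then 1 else 0) * (if T.arc y z = true then 1 else 0) := by
      intro y x
      rw [degF_as_sum, Finset.mul_sum]
    simp only [this, key]
    rw [Finset.sum_comm]
    simp only [Finset.sum_add_distrib]
    congr 1
    · rw [homCount_C3, trip_card_eq_sum]
    · rw [homCount_TT3_s10, trip_card_eq_sum]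
  omega

end Identities
section Analysis

/-- real-valued sum of degrees -/
noncomputable def Sr (T : Tournament) : ℝ := ∑ x : Fin T.n, (degF T x : ℝ)

/-- real-valued sum of squares of degrees -/
noncomputable def D2r (T : Tournament) : ℝ := ∑ x : Fin T.n, (degF T x : ℝ) * (degF T x : ℝ)

lemma c1 (T : Tournament) : 2 * Sr T + (T.n : ℝ) = (T.n : ℝ) * (T.n : ℝ) := by
  have h := congrArg (fun k : ℕ => (k : ℝ)) (sum_degF T)
  push_cast at h
  simpa [Sr] using h

lemma c2 (T : Tournament) : 2 * (homCount TT3 T : ℝ) + Sr T = D2r T := by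
  have h := congrArg (fun k : ℕ => (k : ℝ)) (L2 T)
  push_cast at h
  simpa [Sr, D2r] using h

lemma c3 (T : Tournament) : (homCount C3 T : ℝ) + (homCount TT3 T : ℝ) + D2r T + Sr T
    = (T.n : ℝ) * Sr T := by
  have h := congrArg (fun k : ℕ => (k : ℝ)) (L3 T)
  push_cast at h
  simpa [Sr, D2r] using h

set_option maxHeartbeats 1000000 in
lemma key_est (T : Tournament) (δ : ℝ) (hδ0 : 0 < δ) (hδ2 : δ ≤ 1/2) (h1 : 1 ≤ T.n)
    (hbad : (Nat.card {v : Fin T.n //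
        ¬((1/2 - δ) * (T.n : ℝ) ≤ (outDeg T v : ℝ) ∧
          (outDeg T v : ℝ) ≤ (1/2 + δ) * (T.n : ℝ))} : ℝ) ≤ δ * (T.n : ℝ)) :
    |D2r T / (T.n : ℝ)^3 - 1/4| ≤ 3 * δ := by
  classical
  have hN : (0:ℝ) < (T.n : ℝ) := by exact_mod_cast Nat.lt_of_lt_of_le Nat.zero_lt_one h1
  set N : ℝ := (T.n : ℝ) with hNdef
  set P : Fin T.n → Prop := fun v =>
    (1/2 - δ) * N ≤ (degF T v : ℝ) ∧ (degF T v : ℝ) ≤ (1/2 + δ) * N with hPdef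
  have hbad' : ((Finset.univ.filter (fun v => ¬ P v)).card : ℝ) ≤ δ * N := by
    have heq := natCard_subtype (fun v : Fin T.n =>
        ¬((1/2 - δ) * (T.n : ℝ) ≤ (outDeg T v : ℝ) ∧
          (outDeg T v : ℝ) ≤ (1/2 + δ) * (T.n : ℝ)))
    rw [heq] at hbad
    simpa [hPdef, outDeg_eq_degF] using hbad
  set B := Finset.univ.filter (fun v => ¬ P v) with hB
  set G := Finset.univ.filter P with hG
  have hsplit : D2r T = (∑ x ∈ G, (degF T x : ℝ) * (degF T x : ℝ))
      + ∑ x ∈ B, (degF T x : ℝ) * (degF T x : ℝ) := by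
    rw [D2r, ← Finset.sum_filter_add_sum_filter_not Finset.univ P]
  have hcards : (G.card : ℝ) + (B.card : ℝ) = N := by
    have h := Finset.card_filter_add_card_filter_not (s := Finset.univ) (p := P)
    have h' : G.card + B.card = T.n := by simpa using h
    rw [hNdef]
    exact_mod_cast congrArg (fun k : ℕ => (k : ℝ)) h'
  have hGup : ∀ x ∈ G, (degF T x : ℝ) * (degF T x : ℝ) ≤ ((1/2+δ)*N) * ((1/2+δ)*N) := by
    intro x hx
    obtain ⟨hlo, hhi⟩ : P x := (Finset.mem_filter.mp hx).2
    have h0 : (0:ℝ) ≤ (degF T x : ℝ) := Nat.cast_nonneg _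
    nlinarith
  have hGlo : ∀ x ∈ G, ((1/2-δ)*N) * ((1/2-δ)*N) ≤ (degF T x : ℝ) * (degF T x : ℝ) := by
    intro x hx
    obtain ⟨hlo, hhi⟩ : P x := (Finset.mem_filter.mp hx).2
    have h0 : (0:ℝ) ≤ (1/2-δ)*N := by nlinarith
    nlinarith
  have hBup : ∀ x ∈ B, (degF T x : ℝ) * (degF T x : ℝ) ≤ N * N := by
    intro x _
    have hle : (degF T x : ℝ) ≤ N := by rw [hNdef]; exact_mod_cast degF_le T x
    have h0 : (0:ℝ) ≤ (degF T x : ℝ) := Nat.cast_nonneg _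
    nlinarith
  have hGcard : (G.card : ℝ) ≤ N := by
    have h : G.card ≤ T.n := by simpa using Finset.card_filter_le Finset.univ P
    rw [hNdef]; exact_mod_cast h
  have hBpos : (0:ℝ) ≤ ∑ x ∈ B, (degF T x : ℝ) * (degF T x : ℝ) :=
    Finset.sum_nonneg fun x _ => mul_nonneg (Nat.cast_nonneg _) (Nat.cast_nonneg _)
  have hc2pos : (0:ℝ) ≤ ((1/2+δ)*N) * ((1/2+δ)*N) :=
    mul_nonneg (by nlinarith) (by nlinarith)
  have hc3pos : (0:ℝ) ≤ ((1/2-δ)*N) * ((1/2-δ)*N) :=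
    mul_nonneg (by nlinarith) (by nlinarith)
  have hsum_up : D2r T ≤ N * (((1/2+δ)*N) * ((1/2+δ)*N)) + (δ*N) * (N*N) := by
    rw [hsplit]
    have e1 : (∑ x ∈ G, (degF T x : ℝ) * (degF T x : ℝ))
        ≤ (G.card : ℝ) * (((1/2+δ)*N) * ((1/2+δ)*N)) := by
      simpa [nsmul_eq_mul] using Finset.sum_le_card_nsmul G _ _ hGup
    have e2 : (∑ x ∈ B, (degF T x : ℝ) * (degF T x : ℝ)) ≤ (B.card : ℝ) * (N*N) := by
      simpa [nsmul_eq_mul] using Finset.sum_le_card_nsmul B _ _ hBup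
    have e3 : (G.card : ℝ) * (((1/2+δ)*N) * ((1/2+δ)*N))
        ≤ N * (((1/2+δ)*N) * ((1/2+δ)*N)) := mul_le_mul_of_nonneg_right hGcard hc2pos
    have e4 : (B.card : ℝ) * (N*N) ≤ (δ*N) * (N*N) :=
      mul_le_mul_of_nonneg_right hbad' (mul_nonneg hN.le hN.le)
    linarith
  have hsum_lo : ((1-δ)*N) * (((1/2-δ)*N) * ((1/2-δ)*N)) ≤ D2r T := by
    rw [hsplit]
    have e1 : (G.card : ℝ) * (((1/2-δ)*N) * ((1/2-δ)*N))
        ≤ ∑ x ∈ G, (degF T x : ℝ) * (degF T x : ℝ) := by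
      simpa [nsmul_eq_mul] using Finset.card_nsmul_le_sum G _ _ hGlo
    have e2 : ((1-δ)*N) ≤ (G.card : ℝ) := by linarith
    have e3 : ((1-δ)*N) * (((1/2-δ)*N) * ((1/2-δ)*N))
        ≤ (G.card : ℝ) * (((1/2-δ)*N) * ((1/2-δ)*N)) :=
      mul_le_mul_of_nonneg_right e2 hc3pos
    linarith
  have hN3 : (0:ℝ) < N^3 := by positivity
  have hup : D2r T / N^3 ≤ 1/4 + 3*δ := by
    rw [div_le_iff₀ hN3]
    have expand : N * (((1/2+δ)*N) * ((1/2+δ)*N)) + (δ*N) * (N*N)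
        = ((1/2+δ)*(1/2+δ) + δ) * N^3 := by ring
    have hcoef : ((1/2+δ)*(1/2+δ) + δ) ≤ 1/4 + 3*δ := by nlinarith
    have := mul_le_mul_of_nonneg_right hcoef hN3.le
    linarith
  have hlo : 1/4 - 3*δ ≤ D2r T / N^3 := by
    rw [le_div_iff₀ hN3]
    have expand : ((1-δ)*N) * (((1/2-δ)*N) * ((1/2-δ)*N))
        = ((1-δ)*((1/2-δ)*(1/2-δ))) * N^3 := by ring
    have hcoef : 1/4 - 3*δ ≤ (1-δ)*((1/2-δ)*(1/2-δ)) := by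
      nlinarith [mul_nonneg (mul_nonneg hδ0.le hδ0.le) (by linarith : (0:ℝ) ≤ 2 - δ), sq_nonneg δ]
    have := mul_le_mul_of_nonneg_right hcoef hN3.le
    linarith
  rw [abs_le]
  constructor <;> linarith

end Analysis
section Limits

lemma NR_v_atTop (T : ℕ → Tournament) (hNR : NearlyRegular T)
    (h1 : ∀ᶠ n in atTop, 1 ≤ (T n).n) :
    Tendsto (fun n => (T n).n) atTop atTop := by
  classical
  rw [tendsto_atTop]
  intro b
  have hε : (0:ℝ) < 1/(4*((b:ℝ)+1)) := by positivity
  obtain ⟨n₀, h₀⟩ := hNR (1/(4*((b:ℝ)+1))) hε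
  filter_upwards [h1, eventually_ge_atTop n₀] with n hv1 hn0
  set ε : ℝ := 1/(4*((b:ℝ)+1)) with hεdef
  by_contra hb
  push_neg at hb
  have hbad := h₀ n hn0
  set v := (T n).n with hvdef
  have hvb : (v:ℝ) ≤ (b:ℝ) := by exact_mod_cast hb.le
  have hv1' : (1:ℝ) ≤ (v:ℝ) := by exact_mod_cast hv1
  have hb0 : (0:ℝ) ≤ (b:ℝ) := Nat.cast_nonneg _
  have hεv1 : ε * (v:ℝ) < 1 := by
    rw [hεdef]
    rw [div_mul_eq_mul_div, one_mul, div_lt_one (by positivity)]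
    linarith
  have hcard0 : Nat.card {x : Fin v //
      ¬((1/2 - ε) * (v : ℝ) ≤ (outDeg (T n) x : ℝ) ∧
        (outDeg (T n) x : ℝ) ≤ (1/2 + ε) * (v : ℝ))} = 0 := by
    by_contra hne
    have h1le : 1 ≤ Nat.card {x : Fin v //
        ¬((1/2 - ε) * (v : ℝ) ≤ (outDeg (T n) x : ℝ) ∧
          (outDeg (T n) x : ℝ) ≤ (1/2 + ε) * (v : ℝ))} := Nat.one_le_iff_ne_zero.mpr hne
    have : (1:ℝ) ≤ ε * (v:ℝ) := le_trans (by exact_mod_cast h1le) hbad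
    linarith
  have hgood : ∀ x : Fin v, (1/2 - ε) * (v : ℝ) ≤ (outDeg (T n) x : ℝ) := by
    intro x
    by_contra hx
    have : Nat.card {x : Fin v //
        ¬((1/2 - ε) * (v : ℝ) ≤ (outDeg (T n) x : ℝ) ∧
          (outDeg (T n) x : ℝ) ≤ (1/2 + ε) * (v : ℝ))} ≠ 0 := by
      rw [Nat.card_ne_zero]
      exact ⟨⟨⟨x, fun hc => hx hc.1⟩⟩, Subtype.finite⟩
    exact this hcard0
  have hSlo : (v:ℝ) * ((1/2 - ε) * (v:ℝ)) ≤ Sr (T n) := by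
    rw [Sr]
    have := Finset.card_nsmul_le_sum Finset.univ (fun x => (degF (T n) x : ℝ))
      ((1/2 - ε) * (v:ℝ)) (fun x _ => by simpa [outDeg_eq_degF] using hgood x)
    simpa [nsmul_eq_mul, hvdef] using this
  have hc1 := c1 (T n)
  have hεE : ε * (4*((b:ℝ)+1)) = 1 := by rw [hεdef]; field_simp
  have h2 : (v:ℝ) ≤ 2*ε*((v:ℝ)*(v:ℝ)) := by nlinarith
  have h3 : (v:ℝ)*(v:ℝ) ≤ (b:ℝ)*(v:ℝ) := by nlinarith
  have h4 : (v:ℝ) ≤ 2*ε*((b:ℝ)*(v:ℝ)) := by nlinarith [mul_pos hε (by linarith : (0:ℝ) < (v:ℝ))]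
  nlinarith [mul_pos hε (by linarith : (0:ℝ) < (v:ℝ)), mul_le_mul_of_nonneg_left hvb hε.le]

lemma D2r_div_tendsto (T : ℕ → Tournament) (hNR : NearlyRegular T)
    (hv : Tendsto (fun n => (T n).n) atTop atTop) :
    Tendsto (fun n => D2r (T n) / ((T n).n : ℝ)^3) atTop (𝓝 (1/4)) := by
  rw [Metric.tendsto_atTop]
  intro ε hε
  have hδ0 : 0 < min (ε/7) (1/2 : ℝ) := lt_min (by linarith) (by norm_num)
  obtain ⟨n₀, h₀⟩ := hNR _ hδ0
  have hev : ∀ᶠ n in atTop, 1 ≤ (T n).n ∧ n₀ ≤ n :=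
    (hv.eventually_ge_atTop 1).and (eventually_ge_atTop n₀)
  obtain ⟨N₁, hN₁⟩ := eventually_atTop.mp hev
  refine ⟨N₁, fun n hn => ?_⟩
  obtain ⟨h1, hn0⟩ := hN₁ n hn
  have hk := key_est (T n) _ hδ0 (min_le_right _ _) h1 (h₀ n hn0)
  rw [Real.dist_eq]
  have : min (ε/7) (1/2:ℝ) ≤ ε/7 := min_le_left _ _
  calc |D2r (T n) / ((T n).n : ℝ)^3 - 1/4| ≤ 3 * min (ε/7) (1/2:ℝ) := hk
    _ < ε := by linarith

lemma Sr_nonneg (T : Tournament) : 0 ≤ Sr T :=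
  Finset.sum_nonneg fun x _ => Nat.cast_nonneg _

lemma Sr_div3_tendsto (T : ℕ → Tournament)
    (hv : Tendsto (fun n => (T n).n) atTop atTop) :
    Tendsto (fun n => Sr (T n) / ((T n).n : ℝ)^3) atTop (𝓝 0) := by
  have hNat : Tendsto (fun n => ((T n).n : ℝ)) atTop atTop :=
    tendsto_natCast_atTop_atTop.comp hv
  have hinv : Tendsto (fun n => ((T n).n : ℝ)⁻¹) atTop (𝓝 0) := hNat.inv_tendsto_atTop
  apply squeeze_zero' (g := fun n => ((T n).n : ℝ)⁻¹) _ _ hinv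
  · exact Filter.Eventually.of_forall fun n => div_nonneg (Sr_nonneg _) (by positivity)
  · filter_upwards [hv.eventually_ge_atTop 1] with n h1
    have hvpos : (0:ℝ) < ((T n).n : ℝ) := by exact_mod_cast Nat.lt_of_lt_of_le Nat.zero_lt_one h1
    rw [div_le_iff₀ (by positivity)]
    have hc1 := c1 (T n)
    have : ((T n).n:ℝ)⁻¹ * ((T n).n:ℝ)^3 = ((T n).n:ℝ) * ((T n).n:ℝ) := by
      field_simp
    rw [this]
    nlinarith [Sr_nonneg (T n)]

lemma tendsto_density_TT3 (T : ℕ → Tournament) (hNR : NearlyRegular T)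
    (hv : Tendsto (fun n => (T n).n) atTop atTop) :
    Tendsto (fun n => homDensity TT3 (T n)) atTop (𝓝 (1/8)) := by
  have hD := D2r_div_tendsto T hNR hv
  have hS3 := Sr_div3_tendsto T hv
  have hpt : ∀ n, homDensity TT3 (T n)
      = (D2r (T n) / ((T n).n:ℝ)^3 - Sr (T n) / ((T n).n:ℝ)^3)/2 := by
    intro n
    have hc2 := c2 (T n)
    have : (homCount TT3 (T n) : ℝ) = (D2r (T n) - Sr (T n))/2 := by linarith
    show (homCount TT3 (T n) : ℝ) / ((T n).n : ℝ) ^ TT3.n = _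
    rw [this]
    show ((D2r (T n) - Sr (T n))/2) / ((T n).n : ℝ) ^ (3:ℕ) = _
    ring
  have := (hD.sub hS3).div_const 2
  rw [show ((1:ℝ)/4 - 0)/2 = 1/8 by norm_num] at this
  exact this.congr fun n => (hpt n).symm

lemma Sr_div2_tendsto (T : ℕ → Tournament)
    (hv : Tendsto (fun n => (T n).n) atTop atTop) :
    Tendsto (fun n => Sr (T n) / ((T n).n : ℝ)^2) atTop (𝓝 (1/2)) := by
  have hNat : Tendsto (fun n => ((T n).n : ℝ)) atTop atTop :=
    tendsto_natCast_atTop_atTop.comp hv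
  have h2v : Tendsto (fun n => 2 * ((T n).n : ℝ)) atTop atTop :=
    Tendsto.const_mul_atTop two_pos hNat
  have hinv : Tendsto (fun n => (2 * ((T n).n : ℝ))⁻¹) atTop (𝓝 0) := h2v.inv_tendsto_atTop
  have hlim : Tendsto (fun n => 1/2 - (2 * ((T n).n : ℝ))⁻¹) atTop (𝓝 (1/2)) := by
    have := (tendsto_const_nhds (x := (1/2:ℝ)) (f := atTop)).sub hinv
    simpa using this
  apply hlim.congr'
  filter_upwards [hv.eventually_ge_atTop 1] with n h1
  have hvpos : (0:ℝ) < ((T n).n : ℝ) := by exact_mod_cast Nat.lt_of_lt_of_le Nat.zero_lt_one h1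
  have hc1 := c1 (T n)
  have hS : Sr (T n) = (((T n).n:ℝ) * ((T n).n:ℝ) - ((T n).n:ℝ))/2 := by linarith
  rw [hS]
  field_simp

lemma tendsto_density_C3 (T : ℕ → Tournament) (hNR : NearlyRegular T)
    (hv : Tendsto (fun n => (T n).n) atTop atTop) :
    Tendsto (fun n => homDensity C3 (T n)) atTop (𝓝 (1/8)) := by
  have hD := D2r_div_tendsto T hNR hv
  have hS3 := Sr_div3_tendsto T hv
  have hS2 := Sr_div2_tendsto T hv
  have hTT3 := tendsto_density_TT3 T hNR hv
  have hlim := ((hS2.sub hTT3).sub hD).sub hS3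
  rw [show ((1:ℝ)/2 - 1/8 - 1/4 - 0) = 1/8 by norm_num] at hlim
  apply hlim.congr'
  filter_upwards [hv.eventually_ge_atTop 1] with n h1
  have hvpos : (0:ℝ) < ((T n).n : ℝ) := by exact_mod_cast Nat.lt_of_lt_of_le Nat.zero_lt_one h1
  have hv0 : ((T n).n : ℝ) ≠ 0 := ne_of_gt hvpos
  have hc3 := c3 (T n)
  have hC : (homCount C3 (T n) : ℝ)
      = ((T n).n:ℝ) * Sr (T n) - (homCount TT3 (T n):ℝ) - D2r (T n) - Sr (T n) := by linarith
  have hTTd : homDensity TT3 (T n) = (homCount TT3 (T n) : ℝ) / ((T n).n : ℝ)^(3:ℕ) := rfl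
  show _ = homDensity C3 (T n)
  show _ = (homCount C3 (T n) : ℝ) / ((T n).n : ℝ) ^ C3.n
  rw [show (C3.n) = 3 from rfl, hC, hTTd]
  field_simp
section Rot

lemma mod2 {a n : ℕ} (hn : 0 < n) (h : a < 2*n) : a % n = if a < n then a else a - n := by
  rcases lt_or_ge a n with h'|h'
  · rw [if_pos h', Nat.mod_eq_of_lt h']
  · rw [if_neg (not_lt.mpr h'), Nat.mod_eq_sub_mod h', Nat.mod_eq_of_lt (by omega)]

lemma dval (n i j : ℕ) (hi : i < n) (hj : j < n) :
    (j + n - i) % n = if i ≤ j then j - i else j + n - i := by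
  rcases le_or_gt i j with h|h
  · rw [if_pos h, show j + n - i = (j - i) + n by omega, Nat.add_mod_right,
      Nat.mod_eq_of_lt (by omega)]
  · rw [if_neg (not_le.mpr h), Nat.mod_eq_of_lt (by omega)]

lemma keymod0 (n a q : ℕ) (ha : a < n) (hq : q < n) :
    ((a + q) % n + n - a) % n = q := by
  rcases lt_or_ge (a+q) n with h|h
  · rw [Nat.mod_eq_of_lt h, show (a+q) + n - a = q + n by omega, Nat.add_mod_right,
      Nat.mod_eq_of_lt hq]
  · rw [Nat.mod_eq_sub_mod h, Nat.mod_eq_of_lt (show a+q-n < n by omega),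
      show a+q-n + n - a = q by omega, Nat.mod_eq_of_lt hq]

lemma keymod (n a p q : ℕ) (ha : a < n) (hq : q < n) (hpq : p ≤ q) :
    ((a + q) % n + n - (a + p) % n) % n = q - p := by
  rcases lt_or_ge (a+q) n with h|h
  · have hp : a+p < n := by omega
    rw [Nat.mod_eq_of_lt h, Nat.mod_eq_of_lt hp,
      show (a+q) + n - (a+p) = (q - p) + n by omega, Nat.add_mod_right,
      Nat.mod_eq_of_lt (by omega)]
  · rcases lt_or_ge (a+p) n with h'|h'
    · rw [Nat.mod_eq_sub_mod h, Nat.mod_eq_of_lt (show a+q-n < n by omega),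
        Nat.mod_eq_of_lt h',
        show a+q-n + n - (a+p) = q - p by omega, Nat.mod_eq_of_lt (by omega)]
    · rw [Nat.mod_eq_sub_mod h, Nat.mod_eq_of_lt (show a+q-n < n by omega),
        Nat.mod_eq_sub_mod h', Nat.mod_eq_of_lt (show a+p-n < n by omega),
        show a+q-n + n - (a+p-n) = (q-p) + n by omega, Nat.add_mod_right,
        Nat.mod_eq_of_lt (by omega)]

/-- The rotational tournament on `2m+1` vertices. -/
def rotT (m : ℕ) : Tournament where
  n := 2*m+1
  arc := fun i j => decide (1 ≤ (j.val + (2*m+1) - i.val) % (2*m+1) ∧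
    (j.val + (2*m+1) - i.val) % (2*m+1) ≤ m)
  irrefl := by
    intro i
    have h := dval (2*m+1) i.val i.val i.isLt i.isLt
    rw [if_pos le_rfl] at h
    apply decide_eq_false
    rw [h]
    omega
  total := by
    intro i j hne
    have vne : i.val ≠ j.val := fun hc => hne (Fin.ext hc)
    have d1 := dval (2*m+1) i.val j.val i.isLt j.isLt
    have d2 := dval (2*m+1) j.val i.val j.isLt i.isLt
    have hi := i.isLt
    have hj := j.isLt
    show decide (1 ≤ (j.val + (2*m+1) - i.val) % (2*m+1) ∧
        (j.val + (2*m+1) - i.val) % (2*m+1) ≤ m)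
      = !decide (1 ≤ (i.val + (2*m+1) - j.val) % (2*m+1) ∧
        (i.val + (2*m+1) - j.val) % (2*m+1) ≤ m)
    by_cases hQ : 1 ≤ (i.val + (2*m+1) - j.val) % (2*m+1) ∧
        (i.val + (2*m+1) - j.val) % (2*m+1) ≤ m
    · rw [decide_eq_true hQ]
      apply decide_eq_false
      rw [d1]
      rw [d2] at hQ
      rcases le_or_gt i.val j.val with hij|hij
      · rw [if_pos hij]
        rw [if_neg (by omega)] at hQ
        omega
      · rw [if_neg (not_le.mpr hij)]
        rw [if_pos hij.le] at hQ
        omega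
    · rw [decide_eq_false hQ]
      apply decide_eq_true
      rw [d1]
      rw [d2] at hQ
      rcases le_or_gt i.val j.val with hij|hij
      · rw [if_pos hij]
        rw [if_neg (by omega)] at hQ
        omega
      · rw [if_neg (not_le.mpr hij)]
        rw [if_pos hij.le] at hQ
        omega

lemma rotT_n (m : ℕ) : (rotT m).n = 2*m+1 := rfl

lemma degF_rotT (m : ℕ) (x : Fin (rotT m).n) : degF (rotT m) x = m := by
  classical
  set n := 2*m+1 with hn
  have hx : x.val < n := x.isLt
  set e : Fin m → Fin (rotT m).n :=
    fun k => ⟨(x.val + k.val + 1) % n, Nat.mod_lt _ (by omega)⟩ with he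
  have hinj : Function.Injective e := by
    intro k k' hkk
    have h1 : (x.val + k.val + 1) % n = (x.val + k'.val + 1) % n := congrArg Fin.val hkk
    have m1 := mod2 (show 0 < n by omega) (show x.val + k.val + 1 < 2*n by omega)
    have m2 := mod2 (show 0 < n by omega) (show x.val + k'.val + 1 < 2*n by omega)
    have hk := k.isLt
    have hk' := k'.isLt
    apply Fin.ext
    rw [m1, m2] at h1
    split_ifs at h1 <;> omega
  have himg : Finset.univ.filter (fun j => (rotT m).arc x j = true) = Finset.univ.image e := by
    ext j
    simp only [Finset.mem_filter, Finset.mem_univ, true_and, Finset.mem_image]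
    constructor
    · intro harc
      have harc' := of_decide_eq_true harc
      rw [dval n x.val j.val hx j.isLt] at harc'
      rcases le_or_gt x.val j.val with hij|hij
      · rw [if_pos hij] at harc'
        refine ⟨⟨j.val - x.val - 1, by omega⟩, ?_⟩
        apply Fin.ext
        show (x.val + (j.val - x.val - 1) + 1) % n = j.val
        rw [show x.val + (j.val - x.val - 1) + 1 = j.val by omega, Nat.mod_eq_of_lt (show (j:ℕ) < n from j.isLt)]
      · rw [if_neg (not_le.mpr hij)] at harc'
        refine ⟨⟨j.val + n - x.val - 1, by omega⟩, ?_⟩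
        apply Fin.ext
        show (x.val + (j.val + n - x.val - 1) + 1) % n = j.val
        rw [show x.val + (j.val + n - x.val - 1) + 1 = j.val + n by omega, Nat.add_mod_right,
          Nat.mod_eq_of_lt (show (j:ℕ) < n from j.isLt)]
    · rintro ⟨k, rfl⟩
      apply decide_eq_true
      show 1 ≤ ((x.val + k.val + 1) % n + n - x.val) % n ∧
        ((x.val + k.val + 1) % n + n - x.val) % n ≤ m
      have hk := k.isLt
      have key2 : ((x.val + k.val + 1) % n + n - x.val) % n = k.val + 1 := by
        rw [show x.val + k.val + 1 = x.val + (k.val + 1) by omega]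
        exact keymod0 n x.val (k.val+1) hx (by omega)
      rw [key2]
      omega
  rw [degF, himg, Finset.card_image_of_injective _ hinj, Finset.card_univ, Fintype.card_fin]

lemma rot_nearlyRegular : NearlyRegular (fun k => rotT (k+1)) := by
  intro ε hε
  refine ⟨⌈1/ε⌉₊, fun k hk => ?_⟩
  have hcard : Nat.card {v : Fin (rotT (k+1)).n //
      ¬((1/2 - ε) * ((rotT (k+1)).n : ℝ) ≤ (outDeg (rotT (k+1)) v : ℝ) ∧
        (outDeg (rotT (k+1)) v : ℝ) ≤ (1/2 + ε) * ((rotT (k+1)).n : ℝ))} = 0 := by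
    rw [Nat.card_eq_zero]
    left
    constructor
    rintro ⟨v, hv⟩
    apply hv
    rw [outDeg_eq_degF, degF_rotT]
    have hN : ((rotT (k+1)).n : ℝ) = 2*((k:ℝ)+1)+1 := by
      rw [rotT_n]; push_cast; ring
    have hkε : 1/ε ≤ (k:ℝ) + 1 := by
      have h1 := Nat.le_ceil (1/ε)
      have h2 : (⌈1/ε⌉₊ : ℝ) ≤ (k:ℝ) := by exact_mod_cast hk
      linarith
    have hεk : 1 ≤ ε * ((k:ℝ)+1) := by
      rw [div_le_iff₀ hε] at hkε
      linarith [mul_comm ε ((k:ℝ)+1)]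
    rw [hN]
    push_cast
    constructor <;> nlinarith
  rw [hcard]
  have : (0:ℝ) ≤ ((rotT (k+1)).n : ℝ) := Nat.cast_nonneg _
  push_cast
  nlinarith

lemma rot_v_atTop : Tendsto (fun k => (rotT (k+1)).n) atTop atTop := by
  apply tendsto_atTop_mono (fun k => ?_) tendsto_id
  simp only [id_eq, rotT_n]
  omega

end Rot
section TT8

/-- The transitive tournament on 8 vertices. -/
def TT8 : Tournament := ⟨8, fun i j => decide (i < j), by decide, by decide⟩

/-- offset function for the TT8 injection -/
def oFun (t : ℕ) (b : Fin 7 → Fin t) : Fin 8 → ℕ :=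
  Fin.cases 0 (fun i7 => i7.val * t + 1 + (b i7).val)

lemma oFun_zero (t : ℕ) (b : Fin 7 → Fin t) : oFun t b 0 = 0 := rfl

lemma oFun_succ (t : ℕ) (b : Fin 7 → Fin t) (i7 : Fin 7) :
    oFun t b (Fin.succ i7) = i7.val * t + 1 + (b i7).val := rfl

lemma oFun_le (t : ℕ) (b : Fin 7 → Fin t) (i : Fin 8) : oFun t b i ≤ 7 * t := by
  induction i using Fin.cases with
  | zero => simp [oFun_zero]
  | succ i7 =>
    rw [oFun_succ]
    have h2 : i7.val * t ≤ 6 * t := Nat.mul_le_mul_right t (by omega)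
    have h3 := (b i7).isLt
    omega

lemma oFun_mono (t : ℕ) (b : Fin 7 → Fin t) (i j : Fin 8) (hij : i < j) :
    oFun t b i + 1 ≤ oFun t b j := by
  induction j using Fin.cases with
  | zero => exact absurd hij (by simp [Fin.lt_def])
  | succ j7 =>
    induction i using Fin.cases with
    | zero =>
      rw [oFun_zero, oFun_succ]
      omega
    | succ i7 =>
      have hij' : i7.val < j7.val := by
        have h := hij
        rw [Fin.lt_def] at h
        simpa using h
      rw [oFun_succ, oFun_succ]
      have h1 : (i7.val + 1) * t ≤ j7.val * t := Nat.mul_le_mul_right t (by omega)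
      have h2 : (i7.val + 1) * t = i7.val * t + t := Nat.succ_mul _ _
      have h3 := (b i7).isLt
      omega

lemma homCount_TT8_rot (m : ℕ) (h7 : 7 ≤ m) :
    (2*m+1) * (m/7)^7 ≤ homCount TT8 (rotT m) := by
  classical
  set n := 2*m+1 with hn
  set t := m/7 with ht
  have hdiv : 7*t ≤ m ∧ m < 7*t + 7 ∧ 1 ≤ t := by omega
  set F : Fin n × (Fin 7 → Fin t) → (Fin 8 → Fin (rotT m).n) :=
    fun ab i => ⟨(ab.1.val + oFun t ab.2 i) % n, Nat.mod_lt _ (by omega)⟩ with hF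
  have hFinj : Function.Injective F := by
    rintro ⟨a, b⟩ ⟨a', b'⟩ h
    have hfun : ∀ i : Fin 8, (a.val + oFun t b i) % n = (a'.val + oFun t b' i) % n :=
      fun i => congrArg Fin.val (congrFun h i)
    have haN := a.isLt
    have haN' := a'.isLt
    have haa : a = a' := by
      have h0 := hfun 0
      rw [oFun_zero, oFun_zero, Nat.add_zero, Nat.add_zero,
        Nat.mod_eq_of_lt haN, Nat.mod_eq_of_lt haN'] at h0
      exact Fin.ext h0
    have hbb : b = b' := by
      funext i7
      have hj := hfun (Fin.succ i7)
      have haav : a.val = a'.val := congrArg Fin.val haa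
      rw [haav] at hj
      have e1 := oFun_le t b (Fin.succ i7)
      have e2 := oFun_le t b' (Fin.succ i7)
      have m1 := mod2 (show 0 < n by omega)
        (show a'.val + oFun t b (Fin.succ i7) < 2*n by omega)
      have m2 := mod2 (show 0 < n by omega)
        (show a'.val + oFun t b' (Fin.succ i7) < 2*n by omega)
      rw [m1, m2] at hj
      have oeq : oFun t b (Fin.succ i7) = oFun t b' (Fin.succ i7) := by
        split_ifs at hj <;> omega
      rw [oFun_succ, oFun_succ] at oeq
      exact Fin.ext (by omega)
    simp only [Prod.mk.injEq]
    exact ⟨haa, hbb⟩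
  have hhom : ∀ ab (i j : Fin TT8.n), TT8.arc i j → (rotT m).arc (F ab i) (F ab j) := by
    intro ab i j hij
    have hlt : i < j := of_decide_eq_true hij
    apply decide_eq_true
    have ha := ab.1.isLt
    have hmono := oFun_mono t ab.2 i j hlt
    have hoi := oFun_le t ab.2 i
    have hoj := oFun_le t ab.2 j
    show 1 ≤ ((ab.1.val + oFun t ab.2 j) % n + n - (ab.1.val + oFun t ab.2 i) % n) % n ∧
      ((ab.1.val + oFun t ab.2 j) % n + n - (ab.1.val + oFun t ab.2 i) % n) % n ≤ m
    rw [keymod n ab.1.val (oFun t ab.2 i) (oFun t ab.2 j) ha (by omega) (by omega)]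
    omega
  set Φ : Fin n × (Fin 7 → Fin t) →
      {f : Fin TT8.n → Fin (rotT m).n // ∀ i j, TT8.arc i j → (rotT m).arc (f i) (f j)} :=
    fun ab => ⟨F ab, hhom ab⟩ with hΦ
  have hinjΦ : Function.Injective Φ := fun x y h => hFinj (congrArg Subtype.val h)
  have hcard := Nat.card_le_card_of_injective Φ hinjΦ
  have hdom : Nat.card (Fin n × (Fin 7 → Fin t)) = n * t^7 := by
    simp [Nat.card_eq_fintype_card]
  calc n * t^7 = Nat.card (Fin n × (Fin 7 → Fin t)) := hdom.symm
    _ ≤ Nat.card {f : Fin TT8.n → Fin (rotT m).n //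
          ∀ i j, TT8.arc i j → (rotT m).arc (f i) (f j)} := hcard
    _ = homCount TT8 (rotT m) := rfl

lemma rot_density_TT8_lb : ∀ᶠ k in atTop, (1/15:ℝ)^7 ≤ homDensity TT8 (rotT (k+1)) := by
  filter_upwards [eventually_ge_atTop 96] with k hk
  set m := k + 1 with hm
  have h97 : 97 ≤ m := by omega
  have hcount := homCount_TT8_rot m (by omega)
  have hNpos : (0:ℝ) < ((2*m+1:ℕ):ℝ) := by
    have : (0:ℕ) < 2*m+1 := by omega
    exact_mod_cast this
  have hstep1 : ((2*m+1:ℕ):ℝ) * ((m/7:ℕ):ℝ)^7 ≤ (homCount TT8 (rotT m):ℝ) := by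
    have := hcount
    exact_mod_cast this
  have h15 : (2*m+1 : ℕ) ≤ 15 * (m/7) := by omega
  have hd1 : (1/15:ℝ) ≤ ((m/7:ℕ):ℝ) / ((2*m+1:ℕ):ℝ) := by
    rw [le_div_iff₀ hNpos]
    have h15' : ((2*m+1:ℕ):ℝ) ≤ 15 * ((m/7:ℕ):ℝ) := by exact_mod_cast h15
    linarith
  have hpow : (1/15:ℝ)^7 ≤ (((m/7:ℕ):ℝ) / ((2*m+1:ℕ):ℝ))^7 :=
    pow_le_pow_left₀ (by norm_num) hd1 7
  have heq : (((m/7:ℕ):ℝ) / ((2*m+1:ℕ):ℝ))^7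
      = (((2*m+1:ℕ):ℝ) * ((m/7:ℕ):ℝ)^7) / ((2*m+1:ℕ):ℝ)^8 := by
    field_simp
  have hfin : (((2*m+1:ℕ):ℝ) * ((m/7:ℕ):ℝ)^7) / ((2*m+1:ℕ):ℝ)^8
      ≤ homDensity TT8 (rotT m) := by
    show _ ≤ (homCount TT8 (rotT m) : ℝ) / ((rotT m).n : ℝ) ^ TT8.n
    have hrn : ((rotT m).n : ℝ) = ((2*m+1:ℕ):ℝ) := rfl
    have hTn : TT8.n = 8 := rfl
    rw [hrn, hTn]
    apply div_le_div_of_nonneg_right hstep1 (by positivity) |>.trans_eq rfl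
  linarith

lemma rot_not_qr : ¬ Quasirandom (fun k => rotT (k+1)) := by
  intro hQ
  have h := hQ TT8
  have hlt : ((1:ℝ)/2)^(TT8.n * (TT8.n - 1) / 2) < (1/15:ℝ)^7 := by
    show ((1:ℝ)/2)^(28:ℕ) < (1/15:ℝ)^7
    rw [div_pow, div_pow, one_pow, one_pow, div_lt_div_iff₀ (by positivity) (by positivity)]
    norm_num
  have hev := h.eventually_lt_const hlt
  obtain ⟨k, h1, h2⟩ := (rot_density_TT8_lb.and hev).exists
  linarith

end TT8

section EmptyH

lemma homCount_emptyH (H T : Tournament) (h : H.n = 0) : homCount H T = 1 := by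
  haveI hE : IsEmpty (Fin H.n) := by rw [h]; infer_instance
  haveI : Unique {f : Fin H.n → Fin T.n // ∀ i j, H.arc i j → T.arc (f i) (f j)} :=
    { default := ⟨fun i => isEmptyElim i, fun i => isEmptyElim i⟩
      uniq := fun f => Subtype.ext (funext fun i => isEmptyElim i) }
  rw [homCount, Nat.card_unique]

lemma homDensity_emptyH (H T : Tournament) (h : H.n = 0) : homDensity H T = 1 := by
  rw [homDensity, homCount_emptyH H T h, h]
  simp

lemma homDensity_emptyT (H T : Tournament) (hH : 1 ≤ H.n) (hT : T.n = 0) :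
    homDensity H T = 0 := by
  haveI hE : IsEmpty (Fin T.n) := by rw [hT]; infer_instance
  haveI : IsEmpty {f : Fin H.n → Fin T.n // ∀ i j, H.arc i j → T.arc (f i) (f j)} :=
    ⟨fun f => isEmptyElim (f.1 ⟨0, hH⟩)⟩
  have h0 : homCount H T = 0 := by
    rw [homCount]
    exact Nat.card_of_isEmpty
  rw [homDensity, h0]
  simp

end EmptyH
section Final

lemma lcDensT_pair (a b : ℝ) (P Q T : Tournament) :
    lcDensT [(a,P),(b,Q)] T = a * homDensity P T + b * homDensity Q T := by
  simp [lcDensT]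

lemma lcHalf_pair (a b : ℝ) (P Q : Tournament) :
    lcHalf [(a,P),(b,Q)]
      = a * (1/2:ℝ)^(P.n*(P.n-1)/2) + b * (1/2:ℝ)^(Q.n*(Q.n-1)/2) := by
  simp [lcHalf]

lemma general (H P : Tournament) (hPn : P.n = 3)
    (hlim : ∀ T : ℕ → Tournament, NearlyRegular T →
      Tendsto (fun n => (T n).n) atTop atTop →
      Tendsto (fun n => homDensity P (T n)) atTop (𝓝 (1/8)))
    (hex : ∃ α β : ℝ, ForcesQR {[(α, P), (β, H)]}) : ForcesQRRegular H := by
  obtain ⟨α, β, hF⟩ := hex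
  intro T hNR hH
  by_cases hHn : 1 ≤ H.n
  · -- main case
    have hpos : (0:ℝ) < (1/2 : ℝ)^(H.n * (H.n - 1) / 2) := by positivity
    have hev0 : ∀ᶠ n in atTop, 0 < homDensity H (T n) := hH.eventually_const_lt hpos
    have hev1 : ∀ᶠ n in atTop, 1 ≤ (T n).n := by
      filter_upwards [hev0] with n hn
      by_contra h0
      have hTn0 : (T n).n = 0 := by omega
      rw [homDensity_emptyT H (T n) hHn hTn0] at hn
      exact lt_irrefl 0 hn
    have hv := NR_v_atTop T hNR hev1
    apply hF T hv
    intro c hc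
    rw [Set.mem_singleton_iff] at hc
    subst hc
    have h1 := hlim T hNR hv
    have hsum := (h1.const_mul α).add (hH.const_mul β)
    have heq : α * (1/8 : ℝ) + β * (1/2:ℝ)^(H.n * (H.n - 1) / 2)
        = lcHalf [(α,P),(β,H)] := by
      rw [lcHalf_pair, hPn]
      norm_num
    have hfin : Tendsto (fun n => lcDensT [(α,P),(β,H)] (T n)) atTop
        (𝓝 (α * (1/8 : ℝ) + β * (1/2:ℝ)^(H.n * (H.n - 1) / 2))) :=
      hsum.congr (fun n => (lcDensT_pair α β P H (T n)).symm)
    rwa [heq] at hfin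
  · -- degenerate case : H has no vertices
    have hH0 : H.n = 0 := by omega
    exfalso
    have hNRrot := rot_nearlyRegular
    have hvrot := rot_v_atTop
    have hPlim := hlim _ hNRrot hvrot
    have hdens : Tendsto (fun k => lcDensT [(α,P),(β,H)] (rotT (k+1))) atTop
        (𝓝 (lcHalf [(α,P),(β,H)])) := by
      have heq : ∀ k, lcDensT [(α,P),(β,H)] (rotT (k+1))
          = α * homDensity P (rotT (k+1)) + β := by
        intro k
        rw [lcDensT_pair, homDensity_emptyH H _ hH0, mul_one]
      have hl : Tendsto (fun k => α * homDensity P (rotT (k+1)) + β) atTop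
          (𝓝 (α * (1/8:ℝ) + β)) := (hPlim.const_mul α).add_const β
      have heq2 : lcHalf [(α,P),(β,H)] = α * (1/8:ℝ) + β := by
        rw [lcHalf_pair, hPn, hH0]
        norm_num
      rw [heq2]
      exact hl.congr (fun k => (heq k).symm)
    exact rot_not_qr (hF _ hvrot (fun c hc => by
      rw [Set.mem_singleton_iff] at hc
      subst hc
      exact hdens))

end Final

/-- If some linear combination `α·TT₃ + β·H` (or `α·C₃ + β·H`) forces quasirandomness,
then `H` forces quasirandomness in regular tournaments. -/
theorem statement_10 (H : Tournament) :
    ((∃ α β : ℝ, ForcesQR {[(α, TT3), (β, H)]}) → ForcesQRRegular H) ∧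
    ((∃ α β : ℝ, ForcesQR {[(α, C3), (β, H)]}) → ForcesQRRegular H) := by
  constructor
  · intro hex
    exact general H TT3 rfl (fun T h1 h2 => tendsto_density_TT3 T h1 h2) hex
  · intro hex
    exact general H C3 rfl (fun T h1 h2 => tendsto_density_C3 T h1 h2) hex
end Limits
end

section
/- The homomorphism density of H₉ in the tournamenton W_{C₃} equals 2^{−10}, i.e., t(H₉, W_{C₃}) = 1/1024. -/
open MeasureTheory Filter Topology

/-- The step function underlying the tournamenton `W_{C₃}`: `[0,1]` is divided into
the three consecutive intervals `[0,1/3), [1/3,2/3), [2/3,1]`, with value 1 on blocks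
corresponding to the arcs of `C₃`, value 1/2 on diagonal blocks, and 0 otherwise. -/
noncomputable def WC3fun (x y : ℝ) : ℝ :=
  if x < 1/3 then (if y < 1/3 then 1/2 else if y < 2/3 then 1 else 0)
  else if x < 2/3 then (if y < 1/3 then 0 else if y < 2/3 then 1/2 else 1)
  else (if y < 1/3 then 1 else if y < 2/3 then 0 else 1/2)

lemma measurable_WC3fun : Measurable (Function.uncurry WC3fun) := by
  have hx1 : MeasurableSet {p : ℝ × ℝ | p.1 < 1/3} :=
    measurableSet_lt measurable_fst measurable_const
  have hx2 : MeasurableSet {p : ℝ × ℝ | p.1 < 2/3} :=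
    measurableSet_lt measurable_fst measurable_const
  have hy1 : MeasurableSet {p : ℝ × ℝ | p.2 < 1/3} :=
    measurableSet_lt measurable_snd measurable_const
  have hy2 : MeasurableSet {p : ℝ × ℝ | p.2 < 2/3} :=
    measurableSet_lt measurable_snd measurable_const
  unfold Function.uncurry WC3fun
  exact Measurable.ite hx1
    (Measurable.ite hy1 measurable_const
      (Measurable.ite hy2 measurable_const measurable_const))
    (Measurable.ite hx2
      (Measurable.ite hy1 measurable_const
        (Measurable.ite hy2 measurable_const measurable_const))
      (Measurable.ite hy1 measurable_const
        (Measurable.ite hy2 measurable_const measurable_const)))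

lemma WC3fun_bounds (x y : ℝ) : 0 ≤ WC3fun x y ∧ WC3fun x y ≤ 1 := by
  unfold WC3fun; split_ifs <;> norm_num

lemma WC3fun_skew (x y : ℝ) : WC3fun x y + WC3fun y x = 1 := by
  unfold WC3fun; split_ifs <;> linarith

/-- The tournamenton `W_{C₃}`. -/
noncomputable def WC3 : Tournamenton where
  W := WC3fun
  measurable := measurable_WC3fun
  nonneg := fun x _ y _ => (WC3fun_bounds x y).1
  le_one := fun x _ y _ => (WC3fun_bounds x y).2
  skew := fun x _ y _ => WC3fun_skew x y


noncomputable def gcat (x : ℝ) : Fin 3 := if x < 1/3 then 0 else if x < 2/3 then 1 else 2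

lemma gcat_meas : Measurable gcat := by
  unfold gcat
  exact Measurable.ite (measurableSet_lt measurable_id measurable_const)
    measurable_const <| Measurable.ite (measurableSet_lt measurable_id measurable_const)
    measurable_const measurable_const

def vq : Fin 3 → Fin 3 → ℕ
  | 0,0 => 1 | 0,1 => 2 | 0,2 => 0
  | 1,0 => 0 | 1,1 => 1 | 1,2 => 2
  | 2,0 => 2 | 2,1 => 0 | 2,2 => 1

lemma WC3fun_eq (x y : ℝ) : WC3fun x y = (vq (gcat x) (gcat y) : ℝ) / 2 := by
  unfold WC3fun gcat
  split_ifs <;> norm_num [vq]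

noncomputable abbrev mres : Measure ℝ := volume.restrict (Set.Icc (0:ℝ) 1)

lemma restrict_pi_eq : (volume : Measure (Fin 5 → ℝ)).restrict (Set.univ.pi fun _ => Set.Icc (0:ℝ) 1)
    = Measure.pi (fun _ : Fin 5 => mres) := by
  rw [MeasureTheory.volume_pi]
  refine (Measure.pi_eq fun s hs => ?_).symm
  rw [Measure.restrict_apply (MeasurableSet.univ_pi fun i => (hs i)),
    ← Set.pi_inter_distrib, Measure.pi_pi]
  simp [Measure.restrict_apply (hs _)]

instance : IsFiniteMeasure (mres.map gcat) := by
  constructor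
  rw [Measure.map_apply gcat_meas MeasurableSet.univ]
  simp [Real.volume_Icc]

lemma pre0 : gcat ⁻¹' {0} ∩ Set.Icc (0:ℝ) 1 = Set.Ico (0:ℝ) (1/3) := by
  ext x
  simp only [Set.mem_inter_iff, Set.mem_preimage, Set.mem_singleton_iff, Set.mem_Icc,
    Set.mem_Ico, gcat]
  constructor
  · rintro ⟨hg, h0, h1⟩
    refine ⟨h0, ?_⟩
    by_contra hx
    push_neg at hx
    rw [if_neg (by linarith)] at hg
    split_ifs at hg <;> exact absurd hg (by decide)
  · rintro ⟨h0, hx⟩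
    exact ⟨by rw [if_pos hx], h0, by linarith⟩

lemma pre1 : gcat ⁻¹' {1} ∩ Set.Icc (0:ℝ) 1 = Set.Ico (1/3:ℝ) (2/3) := by
  ext x
  simp only [Set.mem_inter_iff, Set.mem_preimage, Set.mem_singleton_iff, Set.mem_Icc,
    Set.mem_Ico, gcat]
  constructor
  · rintro ⟨hg, h0, h1⟩
    split_ifs at hg with a b
    · exact absurd hg (by decide)
    · exact ⟨le_of_not_gt a, b⟩
    · exact absurd hg (by decide)
  · rintro ⟨ha, hb⟩
    rw [if_neg (not_lt.2 ha), if_pos hb]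
    exact ⟨rfl, by linarith, by linarith⟩

lemma pre2 : gcat ⁻¹' {2} ∩ Set.Icc (0:ℝ) 1 = Set.Icc (2/3:ℝ) 1 := by
  ext x
  simp only [Set.mem_inter_iff, Set.mem_preimage, Set.mem_singleton_iff, Set.mem_Icc, gcat]
  constructor
  · rintro ⟨hg, h0, h1⟩
    split_ifs at hg with a b
    · exact absurd hg (by decide)
    · exact absurd hg (by decide)
    · exact ⟨le_of_not_gt b, h1⟩
  · rintro ⟨ha, hb⟩
    rw [if_neg (by linarith : ¬ x < 1/3), if_neg (by linarith : ¬ x < 2/3)]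
    exact ⟨rfl, by linarith, hb⟩

lemma map_singleton (i : Fin 3) : (mres.map gcat) {i} = ENNReal.ofReal (1/3) := by
  rw [Measure.map_apply gcat_meas (measurableSet_singleton i),
    Measure.restrict_apply' measurableSet_Icc]
  fin_cases i
  · rw [show ({⟨0, by omega⟩} : Set (Fin 3)) = {0} from rfl, pre0, Real.volume_Ico]; norm_num
  · rw [show ({⟨1, by omega⟩} : Set (Fin 3)) = {1} from rfl, pre1, Real.volume_Ico]; norm_num
  · rw [show ({⟨2, by omega⟩} : Set (Fin 3)) = {2} from rfl, pre2, Real.volume_Icc]; norm_num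

lemma map_pi_eq : (Measure.pi (fun _ : Fin 5 => mres)).map (fun x i => gcat (x i))
    = Measure.pi (fun _ : Fin 5 => mres.map gcat) :=
  (MeasureTheory.measurePreserving_pi _ _ (fun _ => ⟨gcat_meas, rfl⟩)).map_eq

set_option maxRecDepth 100000 in
lemma sumn : (∑ a : Fin 5 → Fin 3, ∏ i : Fin 5, ∏ j : Fin 5,
    if H9.arc i j then vq (a i) (a j) else 2) = 7962624 := by decide

theorem main_WC3 : (∫ x in Set.univ.pi (fun _ : Fin 5 => Set.Icc (0:ℝ) 1),
    ∏ i : Fin 5, ∏ j : Fin 5, if H9.arc i j then WC3fun (x i) (x j) else 1) = 1/1024 := by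
  set f : (Fin 5 → Fin 3) → ℝ :=
    fun a => ∏ i : Fin 5, ∏ j : Fin 5, if H9.arc i j then (vq (a i) (a j) : ℝ)/2 else 1 with hfdef
  have hG : Measurable (fun x : Fin 5 → ℝ => fun i => gcat (x i)) :=
    measurable_pi_lambda _ fun i => gcat_meas.comp (measurable_pi_apply i)
  have step1 : (∫ x in Set.univ.pi (fun _ : Fin 5 => Set.Icc (0:ℝ) 1),
      ∏ i : Fin 5, ∏ j : Fin 5, if H9.arc i j then WC3fun (x i) (x j) else 1)
      = ∫ x, f (fun i => gcat (x i)) ∂(Measure.pi (fun _ : Fin 5 => mres)) := by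
    rw [restrict_pi_eq]
    congr 1
    funext x
    simp only [hfdef, WC3fun_eq]
  rw [step1, ← integral_map hG.aemeasurable (measurable_of_countable f).aestronglyMeasurable,
    map_pi_eq, integral_fintype (f := f) .of_finite]
  have hsing : ∀ a : Fin 5 → Fin 3,
      ((Measure.pi (fun _ : Fin 5 => mres.map gcat)) {a}).toReal = (1/3:ℝ)^5 := by
    intro a
    rw [← Set.univ_pi_singleton, Measure.pi_pi]
    simp only [map_singleton, Finset.prod_const, Finset.card_univ, Fintype.card_fin]
    rw [ENNReal.toReal_pow, ENNReal.toReal_ofReal (by norm_num)]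
  simp only [Measure.real, hsing, smul_eq_mul]
  have hf : ∀ a : Fin 5 → Fin 3, f a =
      ((∏ i : Fin 5, ∏ j : Fin 5, if H9.arc i j then vq (a i) (a j) else 2 : ℕ) : ℝ) / 2^25 := by
    intro a
    have : ∀ i j : Fin 5, (if H9.arc i j then (vq (a i) (a j) : ℝ)/2 else 1)
        = ((if H9.arc i j then vq (a i) (a j) else 2 : ℕ) : ℝ) / 2 := by
      intro i j; split <;> norm_num
    simp only [hfdef, this, Finset.prod_div_distrib, Finset.prod_const, Finset.card_univ,
      Fintype.card_fin]
    push_cast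
    ring
  simp only [hf]
  rw [← Finset.mul_sum, ← Finset.sum_div, ← Nat.cast_sum, sumn]
  norm_num

/-- `t(H₉, W_{C₃}) = 1/1024`. -/
theorem statement_13 : tonDensity H9 WC3 = 1/1024 := by
  show (∫ x in Set.univ.pi (fun _ : Fin 5 => Set.Icc (0:ℝ) 1),
    ∏ i : Fin 5, ∏ j : Fin 5, if H9.arc i j then WC3fun (x i) (x j) else 1) = 1/1024
  exact main_WC3
end
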